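/- arXiv:2210.15151 — 10 statements merged into one kernel-verified Lean document; each statement's English description precedes it below -/
import Mathlib

section
/- Let k ≥ 3 be an integer. The graph K_{k+1,k+1} minus a perfect matching is the unique graph G (up to isomorphism) satisfying: (1) G is k-connected; (2) the independence number of G is greater than k; (3) every independent set of cardinality k is a vertex cut of G. -/
open SimpleGraph

/-- `G - S` is disconnected: some two remaining vertices are not connected. -/
def IsVertexCut {V : Type*} (G : SimpleGraph V) (S : Set V) : Prop :=
  ¬ (G.induce Sᶜ).Preconnected

/-- `G` is `k`-connected. -/
def KConnected {V : Type*} [Fintype V] (G : SimpleGraph V) (k : ℕ) : Prop :=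
  k < Fintype.card V ∧ ∀ S : Finset V, S.card < k → ¬ IsVertexCut G ↑S

/-- `S` is an independent set of `G`. -/
def IsIndep {V : Type*} (G : SimpleGraph V) (S : Set V) : Prop :=
  S.Pairwise fun u v => ¬ G.Adj u v

/-- `K_{s,s}` minus a perfect matching: `a i` is adjacent to `b j` iff `i ≠ j`. -/
def KssMinusPM (s : ℕ) : SimpleGraph (Fin s ⊕ Fin s) where
  Adj u v := (∃ i j, i ≠ j ∧ u = Sum.inl i ∧ v = Sum.inr j) ∨
    (∃ i j, i ≠ j ∧ u = Sum.inr i ∧ v = Sum.inl j)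
  symm := by
    refine ⟨?_⟩
    rintro u v (⟨i, j, h, rfl, rfl⟩ | ⟨i, j, h, rfl, rfl⟩)
    · exact Or.inr ⟨j, i, h.symm, rfl, rfl⟩
    · exact Or.inl ⟨j, i, h.symm, rfl, rfl⟩
  loopless := by
    refine ⟨?_⟩
    rintro u (⟨i, j, h, rfl, h2⟩ | ⟨i, j, h, rfl, h2⟩) <;> simp_all

/-!
Let `A` be an independent set of size `k + 1`. For `a ∈ A` the independent `k`-set `A \ {a}` is a
minimum cut, so some vertex lies on its far side from `a`. In a `k`-connected graph every vertex
of a minimum cut has a neighbour in each component it separates; this makes the far sides of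
distinct `a` pairwise disjoint and non-adjacent. Choosing a far-side vertex `σ a` for every
`a ≠ aⱼ` gives an independent `k`-set `Z`, which is a cut although `G - Z - aⱼ` is connected, so
`Z` is exactly the neighbourhood of `aⱼ`. Consequently each far side is a single vertex `σ a`,
adjacent exactly to `A \ {a}`, and `A ∪ σ(A)` is the whole graph: `K_{k+1,k+1}` minus the matching
`a ↦ σ a`. Conversely that graph is `k`-connected, and each of its independent `k`-sets lies on
one side and cuts off the remaining vertex of the other side.
-/

namespace SimpleGraph

variable {V V' : Type*} {G : SimpleGraph V} {G' : SimpleGraph V'}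

lemma Reachable.exists_adj_mem_notMem {H : SimpleGraph V} {C : Set V} {u v : V}
    (h : H.Reachable u v) (hu : u ∈ C) (hv : v ∉ C) : ∃ x y, x ∈ C ∧ y ∉ C ∧ H.Adj x y := by
  obtain ⟨p⟩ := h
  obtain ⟨d, -, hd, hd'⟩ := p.exists_boundary_dart C hu hv
  exact ⟨_, _, hd, hd', d.adj⟩

lemma Reachable.of_adj_of_reachable {H H' : SimpleGraph V} {u v : V} (h : H.Reachable u v)
    (hadj : ∀ x y, H.Reachable u x → H.Adj x y → H'.Adj x y) : H'.Reachable u v := by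
  rw [reachable_iff_reflTransGen] at h
  induction h with
  | refl => rfl
  | tail hux hxy ih =>
    exact ih.trans (hadj _ _ ((reachable_iff_reflTransGen _ _).2 hux) hxy).reachable

variable (G) in
/-- `G - S`, keeping the vertices of `S` as isolated vertices so that it lives on `V`. -/
def removeVerts (S : Set V) : SimpleGraph V where
  Adj u v := G.Adj u v ∧ u ∉ S ∧ v ∉ S
  symm := ⟨fun _ _ h => ⟨h.1.symm, h.2.2, h.2.1⟩⟩
  loopless := ⟨fun _ h => G.loopless.irrefl _ h.1⟩

lemma removeVerts_le (S : Set V) : G.removeVerts S ≤ G := fun _ _ h => h.1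

lemma Reachable.notMem_of_removeVerts {S : Set V} {u v : V}
    (h : (G.removeVerts S).Reachable u v) (hu : u ∉ S) : v ∉ S := by
  rw [reachable_iff_reflTransGen] at h
  induction h with
  | refl => exact hu
  | tail _ hxy _ => exact hxy.2.2

lemma Reachable.removeVerts_of_forall {S Z : Set V} {u v : V}
    (h : (G.removeVerts S).Reachable u v) (hZ : ∀ x, (G.removeVerts S).Reachable u x → x ∉ Z) :
    (G.removeVerts Z).Reachable u v :=
  h.of_adj_of_reachable fun x y hx hxy =>
    ⟨hxy.1, hZ x hx, hZ y (hx.trans hxy.reachable)⟩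

lemma not_isVertexCut_iff {S : Set V} :
    ¬ IsVertexCut G S ↔ ∀ u v, u ∉ S → v ∉ S → (G.removeVerts S).Reachable u v := by
  rw [IsVertexCut, not_not]
  constructor
  · intro h u v hu hv
    let φ : G.induce Sᶜ →g G.removeVerts S := ⟨Subtype.val, fun {x y} hxy => ⟨hxy, x.2, y.2⟩⟩
    exact (h ⟨u, hu⟩ ⟨v, hv⟩).map φ
  · rintro h ⟨u, hu⟩ ⟨v, hv⟩
    have huv := h u v hu hv
    rw [reachable_iff_reflTransGen] at huv
    induction huv with
    | refl => rfl
    | @tail x y _ hxy ih =>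
      exact (ih hxy.2.1).trans (show (G.induce Sᶜ).Adj ⟨x, hxy.2.1⟩ ⟨y, hv⟩ from hxy.1).reachable

lemma isVertexCut_iff {S : Set V} :
    IsVertexCut G S ↔ ∃ u v, u ∉ S ∧ v ∉ S ∧ ¬ (G.removeVerts S).Reachable u v := by
  rw [← not_not (a := IsVertexCut G S), not_isVertexCut_iff]
  push Not
  rfl

lemma isVertexCut_of_forall_adj_mem {S : Set V} {u v : V} (hu : u ∉ S) (hv : v ∉ S)
    (huv : u ≠ v) (hN : ∀ w, G.Adj u w → w ∈ S) : IsVertexCut G S := by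
  refine isVertexCut_iff.2 ⟨u, v, hu, hv, fun h => ?_⟩
  obtain ⟨x, y, rfl, hy, hxy⟩ := h.exists_adj_mem_notMem (C := {u}) rfl huv.symm
  exact hxy.2.2 (hN y hxy.1)

lemma isVertexCut_image_iff (e : G ≃g G') (S : Set V) :
    IsVertexCut G' (e '' S) ↔ IsVertexCut G S := by
  let f : G.induce Sᶜ ≃g G'.induce (e '' S)ᶜ :=
    ⟨e.toEquiv.subtypeEquiv fun v => by simp [e.injective.mem_set_image], by simp [e.map_adj_iff]⟩
  exact not_congr f.preconnected_iff.symm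

lemma isIndep_image_iff (e : G ≃g G') (S : Set V) : IsIndep G' (e '' S) ↔ IsIndep G S := by
  rw [IsIndep, IsIndep, e.injective.injOn.pairwise_image]
  unfold Function.onFun
  simp only [Iso.map_adj_iff]

end SimpleGraph

namespace KConnected

variable {V V' : Type*} [Fintype V] {G : SimpleGraph V} {k : ℕ}

lemma reachable (hG : KConnected G k) {S : Finset V} (hS : S.card < k) {u v : V}
    (hu : u ∉ S) (hv : v ∉ S) : (G.removeVerts S).Reachable u v :=
  not_isVertexCut_iff.1 (hG.2 S hS) u v hu hv

lemma le_ncard_neighborSet (hG : KConnected G k) (v : V) : k ≤ (G.neighborSet v).ncard := by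
  classical
  by_contra! hlt
  let N := (G.neighborSet v).toFinset
  have hN : N.card < k := by rwa [Set.ncard_eq_toFinset_card'] at hlt
  obtain ⟨w, -, hw⟩ := Finset.exists_mem_notMem_of_card_lt_card
    (s := insert v N) (t := Finset.univ) (by
      have := hG.1
      have := Finset.card_insert_le v N
      rw [Finset.card_univ]
      omega)
  rw [Finset.mem_insert, not_or] at hw
  refine hG.2 N hN (isVertexCut_of_forall_adj_mem (u := v) (v := w) ?_ (by simpa using hw.2)
    (Ne.symm hw.1) fun y hy => by simpa [N] using hy)
  simp [N]

/-- Otherwise the vertices of `S` that do have such a neighbour would form a smaller separator. -/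
lemma exists_adj_of_not_reachable (hG : KConnected G k) {S : Finset V} (hS : S.card ≤ k)
    {u w : V} (hu : u ∉ S) (hw : w ∉ S) (huw : ¬ (G.removeVerts S).Reachable u w)
    {s : V} (hs : s ∈ S) : ∃ c, (G.removeVerts S).Reachable u c ∧ G.Adj c s := by
  classical
  by_contra! hno
  let T := S.filter fun t => ∃ c, (G.removeVerts S).Reachable u c ∧ G.Adj c t
  have hTS : T ⊆ S := Finset.filter_subset _ _
  have hT : T.card < k := (Finset.card_lt_card ⟨hTS, fun hST => by
    obtain ⟨c, hc, hcs⟩ := (Finset.mem_filter.1 (hST hs)).2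
    exact hno c hc hcs⟩).trans_le hS
  obtain ⟨x, y, hx, hy, hxy⟩ := (hG.reachable hT (fun h => hu (hTS h)) fun h => hw (hTS h))
    |>.exists_adj_mem_notMem (C := {c | (G.removeVerts S).Reachable u c}) .rfl huw
  by_cases hyS : y ∈ S
  · exact hxy.2.2 (Finset.mem_filter.2 ⟨hyS, x, hx, hxy.1⟩)
  · exact hy (hx.trans (Adj.reachable ⟨hxy.1, hx.notMem_of_removeVerts hu, hyS⟩))

lemma of_iso {G' : SimpleGraph V'} [Fintype V'] (e : G ≃g G') (h : KConnected G' k) :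
    KConnected G k := by
  refine ⟨Fintype.card_congr e.toEquiv ▸ h.1, fun S hS hcut => ?_⟩
  refine h.2 (S.map e.toEquiv.toEmbedding) (by rwa [Finset.card_map]) ?_
  rw [Finset.coe_map]
  exact (isVertexCut_image_iff e _).2 hcut

end KConnected

namespace KssMinusPM

open Finset

variable {s : ℕ} {i j : Fin s} {S : Finset (Fin s ⊕ Fin s)}

@[simp] lemma adj_inl_inr : (KssMinusPM s).Adj (.inl i) (.inr j) ↔ i ≠ j := by
  simp [KssMinusPM]

@[simp] lemma adj_inr_inl : (KssMinusPM s).Adj (.inr i) (.inl j) ↔ i ≠ j := by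
  simp [KssMinusPM]

@[simp] lemma not_adj_inl_inl : ¬ (KssMinusPM s).Adj (.inl i) (.inl j) := by
  simp [KssMinusPM]

@[simp] lemma not_adj_inr_inr : ¬ (KssMinusPM s).Adj (.inr i) (.inr j) := by
  simp [KssMinusPM]

def swap : KssMinusPM s ≃g KssMinusPM s :=
  ⟨Equiv.sumComm _ _, by rintro (i | i) (j | j) <;> simp⟩

lemma isVertexCut_map_sumComm :
    IsVertexCut (KssMinusPM s) ↑(S.map (Equiv.sumComm _ _).toEmbedding) ↔
      IsVertexCut (KssMinusPM s) ↑S := by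
  rw [coe_map]
  exact isVertexCut_image_iff swap _

lemma exists_notMem_of_card_add_lt {X Y : Finset (Fin s)} (h : #X + #Y < s) :
    ∃ i, i ∉ X ∧ i ∉ Y := by
  obtain ⟨i, -, hi⟩ := exists_mem_notMem_of_card_lt_card (s := X ∪ Y) (t := univ)
    (by simpa using (card_union_le X Y).trans_lt h)
  exact ⟨i, by simpa using hi⟩

/-- Every free vertex reaches a fixed free left vertex: two free left vertices have a common
free right neighbour because the right side, the one with fewer deletions, keeps at least three
free vertices. -/
lemma reachable_of_card_toRight_le (hs : 4 ≤ s) (hS : #S + 2 ≤ s)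
    (hRL : #S.toRight ≤ #S.toLeft) {u v : Fin s ⊕ Fin s} (hu : u ∉ S) (hv : v ∉ S) :
    ((KssMinusPM s).removeVerts S).Reachable u v := by
  have hLR := card_toLeft_add_card_toRight (u := S)
  obtain ⟨i₀, -, hi₀⟩ := exists_notMem_of_card_add_lt (X := ∅) (Y := S.toLeft)
    (by simp only [card_empty]; omega)
  rw [mem_toLeft] at hi₀
  have hstep : ∀ x y, x ∉ S → y ∉ S → (KssMinusPM s).Adj x y →
      ((KssMinusPM s).removeVerts S).Reachable x y := fun x y hx hy hxy =>
    Adj.reachable ⟨hxy, hx, hy⟩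
  have hleft : ∀ i, .inl i ∉ S → ((KssMinusPM s).removeVerts S).Reachable (.inl i) (.inl i₀) := by
    intro i hi
    obtain ⟨m, hm, hmS⟩ := exists_notMem_of_card_add_lt (X := {i, i₀}) (Y := S.toRight)
      (by have := card_le_two (a := i) (b := i₀); omega)
    simp only [mem_insert, mem_singleton, not_or, mem_toRight] at hm hmS
    exact (hstep _ _ hi hmS (by simpa using Ne.symm hm.1)).trans
      (hstep _ _ hmS hi₀ (by simpa using hm.2))
  have hhub : ∀ u ∉ S, ((KssMinusPM s).removeVerts S).Reachable u (.inl i₀) := by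
    rintro (i | j) hu
    · exact hleft i hu
    · obtain ⟨i, hi, hiS⟩ := exists_notMem_of_card_add_lt (X := {j}) (Y := S.toLeft)
        (by rw [card_singleton]; omega)
      rw [mem_singleton, mem_toLeft] at *
      exact (hstep _ _ hu hiS (by simpa using Ne.symm hi)).trans (hleft i hiS)
  exact (hhub u hu).trans (hhub v hv).symm

lemma not_isVertexCut (hs : 4 ≤ s) (hS : #S + 2 ≤ s) : ¬ IsVertexCut (KssMinusPM s) ↑S := by
  wlog hRL : #S.toRight ≤ #S.toLeft generalizing S
  · rw [← isVertexCut_map_sumComm]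
    exact this (by rwa [card_map]) (by simp only [toRight_map_sumComm, toLeft_map_sumComm]; omega)
  exact not_isVertexCut_iff.2 fun u v hu hv => reachable_of_card_toRight_le hs hS hRL hu hv

lemma toLeft_eq_empty_or_toRight_eq_empty (hS : IsIndep (KssMinusPM s) ↑S) (h3 : 3 ≤ #S) :
    S.toLeft = ∅ ∨ S.toRight = ∅ := by
  by_contra! h
  obtain ⟨⟨i, hi⟩, ⟨j, hj⟩⟩ := h
  rw [mem_toLeft] at hi
  rw [mem_toRight] at hj
  have hmatch : ∀ a b, .inl a ∈ S → .inr b ∈ S → a = b := fun a b ha hb => by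
    by_contra hab
    exact hS ha hb (by simp) (adj_inl_inr.2 hab)
  have hsub : S ⊆ {.inl i, .inr i} := by
    rintro (c | c) hc
    · simp [hmatch c j hc hj, hmatch i j hi hj]
    · simp [hmatch i c hi hc]
  have := (card_le_card hsub).trans card_le_two
  omega

/-- With all left vertices but `inl t` deleted, `inr t` is cut off from `inl t`. -/
lemma isVertexCut_of_toRight_eq_empty (hS : S.toRight = ∅) (hcard : #S + 1 = s) :
    IsVertexCut (KssMinusPM s) ↑S := by
  have hL : #S.toLeft + 1 = s := by
    have := card_toLeft_add_card_toRight (u := S)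
    rw [hS, card_empty] at this
    omega
  obtain ⟨t, ht⟩ := card_eq_one.1 (show #S.toLeftᶜ = 1 by
    rw [card_compl, Fintype.card_fin]; omega)
  have hmem : ∀ j, .inl j ∈ S ↔ j ≠ t := fun j => by
    rw [← mem_toLeft, ← not_iff_not, not_not, ← mem_compl, ht, mem_singleton]
  have hR : ∀ j, .inr j ∉ S := fun j h => by simpa [hS] using mem_toRight.2 h
  refine isVertexCut_of_forall_adj_mem (u := .inr t) (v := .inl t) (hR t) (by simp [hmem])
    Sum.inr_ne_inl ?_
  rintro (j | j) h
  · simpa [hmem, eq_comm] using h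
  · exact absurd h not_adj_inr_inr

lemma isVertexCut_of_isIndep (hS : IsIndep (KssMinusPM s) ↑S) (h3 : 3 ≤ #S)
    (hcard : #S + 1 = s) : IsVertexCut (KssMinusPM s) ↑S := by
  rcases toLeft_eq_empty_or_toRight_eq_empty hS h3 with h | h
  · rw [← isVertexCut_map_sumComm]
    exact isVertexCut_of_toRight_eq_empty (by rwa [toRight_map_sumComm]) (by rwa [card_map])
  · exact isVertexCut_of_toRight_eq_empty h hcard

lemma kConnected {k : ℕ} (hk : 3 ≤ k) : KConnected (KssMinusPM (k + 1)) k :=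
  ⟨by simp; omega, fun _ hS => not_isVertexCut (by omega) (by omega)⟩

lemma isIndep_map_inl :
    IsIndep (KssMinusPM s) ↑(univ.map .inl : Finset (Fin s ⊕ Fin s)) := by
  rintro _ hx _ hy -
  simp only [coe_map, coe_univ, Set.image_univ, Set.mem_range] at hx hy
  obtain ⟨⟨i, rfl⟩, ⟨j, rfl⟩⟩ := And.intro hx hy
  exact not_adj_inl_inl

end KssMinusPM

section Recognition

open Finset

variable {V : Type*} [DecidableEq V] {G : SimpleGraph V} {A : Finset V} {β : V → V}

lemma mem_or_exists_eq_of_neighborSet (hG : G.Preconnected) (hAne : A.Nonempty)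
    (hN : ∀ a ∈ A, G.neighborSet a = ↑((A.erase a).image β))
    (hNβ : ∀ a ∈ A, G.neighborSet (β a) = ↑(A.erase a)) (v : V) : v ∈ A ∨ ∃ a ∈ A, β a = v := by
  by_contra hv
  obtain ⟨a₀, ha₀⟩ := hAne
  obtain ⟨x, y, hx, hy, hxy⟩ := (hG a₀ v).exists_adj_mem_notMem
    (C := {x | x ∈ A ∨ ∃ a ∈ A, β a = x}) (Or.inl ha₀) hv
  rw [← mem_neighborSet] at hxy
  rcases hx with hxA | ⟨a, ha, rfl⟩
  · rw [hN x hxA, coe_image] at hxy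
    obtain ⟨b, hb, rfl⟩ := hxy
    exact hy (Or.inr ⟨b, mem_of_mem_erase hb, rfl⟩)
  · rw [hNβ a ha] at hxy
    exact hy (Or.inl (mem_of_mem_erase hxy))

lemma nonempty_iso_kssMinusPM {s : ℕ} (hA : #A = s) (hinj : Set.InjOn β A)
    (hβA : ∀ a ∈ A, β a ∉ A) (hcover : ∀ v, v ∈ A ∨ ∃ a ∈ A, β a = v)
    (hN : ∀ a ∈ A, G.neighborSet a = ↑((A.erase a).image β))
    (hNβ : ∀ a ∈ A, G.neighborSet (β a) = ↑(A.erase a)) :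
    Nonempty (G ≃g KssMinusPM s) := by
  let f : Fin s ≃ A := (A.equivFinOfCardEq hA).symm
  let g : Fin s ⊕ Fin s → V := Sum.elim (fun i => f i) (fun i => β (f i))
  have hf : ∀ i j, (f i : V) = f j ↔ i = j := fun i j => by
    rw [Subtype.coe_inj, f.apply_eq_iff_eq]
  have hβf : ∀ i j, β (f i) = β (f j) ↔ i = j := fun i j =>
    ⟨fun h => (hf i j).1 (hinj (f i).2 (f j).2 h), fun h => h ▸ rfl⟩
  have hadj : ∀ i j, G.Adj (f i) (β (f j)) ↔ i ≠ j := fun i j => by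
    rw [← mem_neighborSet, hN _ (f i).2, coe_image]
    constructor
    · rintro ⟨b, hb, hbj⟩ rfl
      exact (mem_erase.1 hb).1 (hinj (mem_of_mem_erase hb) (f i).2 hbj)
    · exact fun hij => ⟨f j, mem_erase.2 ⟨fun h => hij ((hf j i).1 h).symm, (f j).2⟩, rfl⟩
  have hββ : ∀ i j, ¬ G.Adj (β (f i)) (β (f j)) := fun i j h => by
    rw [← mem_neighborSet, hNβ _ (f i).2] at h
    exact hβA _ (f j).2 (mem_of_mem_erase h)
  have hAA : ∀ i j, ¬ G.Adj (f i) (f j) := fun i j h => by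
    rw [← mem_neighborSet, hN _ (f i).2, coe_image] at h
    obtain ⟨b, hb, hbj⟩ := h
    exact hβA b (mem_of_mem_erase hb) (hbj ▸ (f j).2)
  have hg : Function.Bijective g := by
    refine ⟨?_, fun v => ?_⟩
    · rintro (i | i) (j | j) h <;> simp only [g, Sum.elim_inl, Sum.elim_inr] at h
      · exact congrArg _ ((hf i j).1 h)
      · exact absurd (h ▸ (f i).2) (hβA _ (f j).2)
      · exact absurd (h ▸ (f j).2) (hβA _ (f i).2)
      · exact congrArg _ ((hβf i j).1 h)
    · rcases hcover v with hv | ⟨a, ha, rfl⟩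
      · exact ⟨.inl (f.symm ⟨v, hv⟩), by simp [g]⟩
      · exact ⟨.inr (f.symm ⟨a, ha⟩), by simp [g]⟩
  refine ⟨(RelIso.mk (Equiv.ofBijective g hg) fun {x y} => ?_).symm⟩
  rcases x with i | i <;> rcases y with j | j
  · simpa [g] using hAA i j
  · simpa [g] using hadj i j
  · simpa [g, ne_comm, adj_comm] using hadj j i
  · simpa [g] using hββ i j

end Recognition

section FarSide

open Finset

variable {V : Type*} [DecidableEq V] (G : SimpleGraph V)

def farSide (A : Finset V) (a : V) : Set V :=
  {v | v ∉ A.erase a ∧ ¬ (G.removeVerts ↑(A.erase a)).Reachable a v}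

variable {G} {A : Finset V} {a a' aj v w : V} {σ : V → V}

lemma notMem_of_mem_farSide (hv : v ∈ farSide G A a) : v ∉ A := by
  intro hvA
  by_cases hva : v = a
  · exact hv.2 (hva ▸ .rfl)
  · exact hv.1 (mem_erase.2 ⟨hva, hvA⟩)

lemma farSide_nonempty (h : IsVertexCut G ↑(A.erase a)) : (farSide G A a).Nonempty := by
  obtain ⟨u, w, hu, hw, huw⟩ := isVertexCut_iff.1 h
  by_cases hau : (G.removeVerts ↑(A.erase a)).Reachable a u
  · exact ⟨w, hw, fun haw => huw (hau.symm.trans haw)⟩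
  · exact ⟨u, hu, hau⟩

lemma mem_farSide_of_reachable (hv : v ∈ farSide G A a)
    (hvw : (G.removeVerts ↑(A.erase a)).Reachable v w) : w ∈ farSide G A a :=
  ⟨hvw.notMem_of_removeVerts hv.1, fun haw => hv.2 (haw.trans hvw.symm)⟩

lemma mem_farSide_iff_of_adj (hv : v ∉ A) (hw : w ∉ A) (hvw : G.Adj v w) :
    v ∈ farSide G A a ↔ w ∈ farSide G A a := by
  have hstep : ∀ {x y}, x ∉ A → y ∉ A → G.Adj x y →
      (G.removeVerts ↑(A.erase a)).Reachable x y := fun hx hy hxy =>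
    Adj.reachable ⟨hxy, fun h => hx (mem_of_mem_erase h), fun h => hy (mem_of_mem_erase h)⟩
  exact ⟨fun h => mem_farSide_of_reachable h (hstep hv hw hvw),
    fun h => mem_farSide_of_reachable h (hstep hw hv hvw.symm)⟩

lemma notMem_of_mem_image (hσ : ∀ a ∈ A, σ a ∈ farSide G A a) {B : Finset V} (hB : B ⊆ A)
    (hv : v ∈ B.image σ) : v ∉ A := by
  obtain ⟨b, hb, rfl⟩ := mem_image.1 hv
  exact notMem_of_mem_farSide (hσ b (hB hb))

variable [Fintype V] {k : ℕ}

/-- `a'` lies on the minimum cut `A \ {a}`, so it has a neighbour in the component of `v`. -/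
lemma reachable_of_mem_farSide (hG : KConnected G k) (hA : #A ≤ k + 1) (ha : a ∈ A)
    (ha' : a' ∈ A) (hne : a' ≠ a) (hv : v ∈ farSide G A a) :
    (G.removeVerts ↑(A.erase a')).Reachable v a' := by
  obtain ⟨c, hvc, hca'⟩ := hG.exists_adj_of_not_reachable (w := a)
    (by rw [card_erase_of_mem ha]; omega) hv.1 (notMem_erase a A) (fun h => hv.2 h.symm)
    (mem_erase.2 ⟨hne, ha'⟩)
  have hcomp : ∀ x, (G.removeVerts ↑(A.erase a)).Reachable v x → x ∉ (↑(A.erase a') : Set V) :=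
    fun x hx hxA => notMem_of_mem_farSide (mem_farSide_of_reachable hv hx) (mem_of_mem_erase hxA)
  exact (hvc.removeVerts_of_forall hcomp).trans
    (Adj.reachable ⟨hca', hcomp c hvc, notMem_erase a' A⟩)

lemma eq_of_mem_farSide (hG : KConnected G k) (hA : #A ≤ k + 1) (ha : a ∈ A) (ha' : a' ∈ A)
    (hv : v ∈ farSide G A a) (hv' : v ∈ farSide G A a') : a = a' := by
  by_contra hne
  exact hv'.2 (reachable_of_mem_farSide hG hA ha ha' (Ne.symm hne) hv).symm

lemma not_adj_of_mem_farSide (hG : KConnected G k) (hA : #A ≤ k + 1) (ha : a ∈ A) (ha' : a' ∈ A)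
    (hne : a ≠ a') (hv : v ∈ farSide G A a) (hw : w ∈ farSide G A a') : ¬ G.Adj v w := fun h =>
  hne <| eq_of_mem_farSide hG hA ha ha'
    ((mem_farSide_iff_of_adj (notMem_of_mem_farSide hv) (notMem_of_mem_farSide hw) h).1 hv) hw

lemma injOn_of_mem_farSide (hG : KConnected G k) (hA : #A ≤ k + 1)
    (hσ : ∀ a ∈ A, σ a ∈ farSide G A a) : Set.InjOn σ A := fun a ha a' ha' h =>
  eq_of_mem_farSide hG hA ha ha' (hσ a ha) (h ▸ hσ a' ha')

lemma isIndep_image_of_mem_farSide (hG : KConnected G k) (hA : #A ≤ k + 1)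
    (hσ : ∀ a ∈ A, σ a ∈ farSide G A a) : IsIndep G (σ '' A) := by
  rintro _ ⟨a, ha, rfl⟩ _ ⟨a', ha', rfl⟩ hne
  exact not_adj_of_mem_farSide hG hA ha ha' (fun h => hne (h ▸ rfl)) (hσ a ha) (hσ a' ha')

/-- Walk from `x` to `A` in `G - T`, where `T` consists of `aj` and the at most one vertex of
`Z = σ (A \ {aj})` lying on the same far sides as `x`: until the walk first meets `A` it keeps
the far sides of `x`, so it avoids `Z`. -/
lemma exists_reachable_of_notMem_image (hk : 3 ≤ k) (hG : KConnected G k) (hA : #A = k + 1)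
    (hσ : ∀ a ∈ A, σ a ∈ farSide G A a) (haj : aj ∈ A) {x : V}
    (hxZ : x ∉ (A.erase aj).image σ) (hxj : x ≠ aj) :
    ∃ a ∈ A.erase aj, (G.removeVerts ↑((A.erase aj).image σ)).Reachable x a := by
  classical
  set Z := (A.erase aj).image σ
  by_cases hxA : x ∈ A
  · exact ⟨x, mem_erase.2 ⟨hxj, hxA⟩, .rfl⟩
  have hZA : ∀ z ∈ Z, z ∉ A := fun z => notMem_of_mem_image hσ (erase_subset aj A)
  let P : V → Prop := fun y => ∀ b ∈ A, (y ∈ farSide G A b ↔ x ∈ farSide G A b)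
  have hPZ : #(Z.filter P) ≤ 1 := by
    refine card_le_one.2 fun z hz z' hz' => ?_
    simp only [Z, mem_filter, mem_image] at hz hz'
    obtain ⟨⟨b, hb, rfl⟩, hPb⟩ := hz
    obtain ⟨⟨b', hb', rfl⟩, hPb'⟩ := hz'
    have hb := mem_of_mem_erase hb
    have hb' := mem_of_mem_erase hb'
    exact congrArg σ (eq_of_mem_farSide hG hA.le hb hb' ((hPb b hb).1 (hσ b hb))
      ((hPb' b' hb').1 (hσ b' hb')))
  set T := insert aj (Z.filter P)
  have hZT : ∀ z, P z → z ∉ T → z ∉ Z := fun z hPz hzT hzZ =>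
    hzT (mem_insert_of_mem (mem_filter.2 ⟨hzZ, hPz⟩))
  obtain ⟨a₁, ha₁⟩ : (A.erase aj).Nonempty := by
    rw [← card_pos, card_erase_of_mem haj]; omega
  have ha₁T : a₁ ∉ T := by
    simp only [T, mem_insert, mem_filter, not_or, not_and]
    exact ⟨ne_of_mem_erase ha₁, fun h => absurd (mem_of_mem_erase ha₁) (hZA a₁ h)⟩
  have hxT : x ∉ T := by simp [T, hxj, hxZ]
  by_contra! hno
  obtain ⟨y, y', ⟨hyA, hPy, hxy⟩, hy', hyy'⟩ :=
    (hG.reachable ((card_insert_le _ _).trans_lt (by omega)) hxT ha₁T).exists_adj_mem_notMem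
      (C := {y | y ∉ A ∧ P y ∧ (G.removeVerts Z).Reachable x y}) ⟨hxA, fun _ _ => .rfl, .rfl⟩
      fun h => h.1 (mem_of_mem_erase ha₁)
  obtain ⟨hadj, hyT, hy'T⟩ := hyy'
  have hyZ : y ∉ Z := hZT y hPy hyT
  by_cases hy'A : y' ∈ A
  · exact hno y' (mem_erase.2 ⟨fun h => hy'T (h ▸ mem_insert_self _ _), hy'A⟩)
      (hxy.trans (Adj.reachable ⟨hadj, hyZ, fun h => hZA y' h hy'A⟩))
  · have hPy' : P y' := fun b hb => (mem_farSide_iff_of_adj hyA hy'A hadj).symm.trans (hPy b hb)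
    exact hy' ⟨hy'A, hPy', hxy.trans (Adj.reachable ⟨hadj, hyZ, hZT y' hPy' hy'T⟩)⟩

lemma reachable_image_of_mem_erase (hG : KConnected G k) (hA : #A ≤ k + 1)
    (hσ : ∀ a ∈ A, σ a ∈ farSide G A a) (haj : aj ∈ A) (ha : a ∈ A.erase aj) :
    (G.removeVerts ↑((A.erase aj).image σ)).Reachable a (σ aj) := by
  obtain ⟨c, hc, hca⟩ := hG.exists_adj_of_not_reachable (w := aj)
    (by rw [card_erase_of_mem haj]; omega) (hσ aj haj).1 (notMem_erase aj A)
    (fun h => (hσ aj haj).2 h.symm) ha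
  have hcomp : ∀ x, (G.removeVerts ↑(A.erase aj)).Reachable (σ aj) x →
      x ∉ (↑((A.erase aj).image σ) : Set V) := by
    intro x hx hxZ
    obtain ⟨b, hb, rfl⟩ := mem_image.1 hxZ
    exact ne_of_mem_erase hb (eq_of_mem_farSide hG hA (mem_of_mem_erase hb) haj
      (hσ b (mem_of_mem_erase hb)) (mem_farSide_of_reachable (hσ aj haj) hx))
  have haZ : a ∉ (↑((A.erase aj).image σ) : Set V) := fun h =>
    notMem_of_mem_image hσ (erase_subset aj A) h (mem_of_mem_erase ha)
  exact ((hc.removeVerts_of_forall hcomp).trans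
    (Adj.reachable ⟨hca, hcomp c hc, haZ⟩)).symm

lemma neighborSet_eq_image (hk : 3 ≤ k) (hG : KConnected G k) (hA : #A = k + 1)
    (hcut : ∀ S : Finset V, IsIndep G ↑S → #S = k → IsVertexCut G ↑S)
    (hσ : ∀ a ∈ A, σ a ∈ farSide G A a) (haj : aj ∈ A) :
    G.neighborSet aj = ↑((A.erase aj).image σ) := by
  set Z := (A.erase aj).image σ
  have hZ : #Z = k := by
    rw [card_image_of_injOn ((injOn_of_mem_farSide hG hA.le hσ).mono (by simp)),
      card_erase_of_mem haj, hA, Nat.add_sub_cancel]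
  have hZind : IsIndep G ↑Z := Set.Pairwise.mono
    (by rw [coe_image]; exact Set.image_mono (coe_subset.2 (erase_subset aj A)))
    (isIndep_image_of_mem_farSide hG hA.le hσ)
  obtain ⟨p, q, hp, hq, hpq⟩ := isVertexCut_iff.1 (hcut Z hZind hZ)
  have hajZ : aj ∉ Z := fun h => notMem_of_mem_image hσ (erase_subset aj A) h haj
  have hreach : ∀ x ∉ Z, x ≠ aj → (G.removeVerts ↑Z).Reachable x (σ aj) := fun x hx hxj => by
    obtain ⟨a, ha, hxa⟩ := exists_reachable_of_notMem_image hk hG hA hσ haj hx hxj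
    exact hxa.trans (reachable_image_of_mem_erase hG hA.le hσ haj ha)
  have hsep : ¬ (G.removeVerts ↑Z).Reachable aj (σ aj) := fun h => by
    have hall : ∀ x ∉ Z, (G.removeVerts ↑Z).Reachable x (σ aj) := fun x hx =>
      (eq_or_ne x aj).elim (fun hxj => hxj ▸ h) (hreach x hx)
    exact hpq ((hall p hp).trans (hall q hq).symm)
  refine Set.eq_of_subset_of_ncard_le (fun y hy => ?_)
    (by rw [Set.ncard_coe_finset, hZ]; exact hG.le_ncard_neighborSet aj)
  by_contra hyZ
  have hajy : (G.removeVerts ↑Z).Adj aj y := ⟨hy, hajZ, hyZ⟩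
  exact hsep (hajy.reachable.trans (hreach y hyZ (G.ne_of_adj hy).symm))

lemma farSide_eq_singleton (hk : 3 ≤ k) (hG : KConnected G k) (hA : #A = k + 1)
    (hcut : ∀ S : Finset V, IsIndep G ↑S → #S = k → IsVertexCut G ↑S)
    (hσ : ∀ a ∈ A, σ a ∈ farSide G A a) (ha : a ∈ A) : farSide G A a = {σ a} := by
  refine Set.Subset.antisymm (fun x hx => ?_) (Set.singleton_subset_iff.2 (hσ a ha))
  obtain ⟨aj, haj, hja⟩ := exists_mem_ne (by omega : 1 < #A) a
  have hσ' : ∀ b ∈ A, Function.update σ a x b ∈ farSide G A b := fun b hb => by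
    rcases eq_or_ne b a with rfl | hba
    · simpa using hx
    · simpa [hba] using hσ b hb
  have hadj : G.Adj aj x := by
    rw [← mem_neighborSet, neighborSet_eq_image hk hG hA hcut hσ' haj, coe_image]
    exact ⟨a, mem_erase.2 ⟨hja.symm, ha⟩, by simp⟩
  rw [← mem_neighborSet, neighborSet_eq_image hk hG hA hcut hσ haj, coe_image] at hadj
  obtain ⟨b, hb, rfl⟩ := hadj
  have hb := mem_of_mem_erase hb
  rw [eq_of_mem_farSide hG hA.le hb ha (hσ b hb) hx, Set.mem_singleton_iff]

lemma neighborSet_eq_erase (hk : 3 ≤ k) (hG : KConnected G k) (hA : #A = k + 1)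
    (hcut : ∀ S : Finset V, IsIndep G ↑S → #S = k → IsVertexCut G ↑S)
    (hσ : ∀ a ∈ A, σ a ∈ farSide G A a) (ha : a ∈ A) : G.neighborSet (σ a) = ↑(A.erase a) := by
  have hfar := farSide_eq_singleton hk hG hA hcut hσ ha
  ext y
  constructor
  · intro hy
    by_contra hyA
    have : y ∈ farSide G A a := mem_farSide_of_reachable (hσ a ha)
      (Adj.reachable ⟨hy, (hσ a ha).1, hyA⟩)
    rw [hfar, Set.mem_singleton_iff] at this
    exact G.loopless.irrefl _ (this ▸ hy)
  · intro hy
    obtain ⟨c, hc, hcy⟩ := hG.exists_adj_of_not_reachable (w := a)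
      (by rw [card_erase_of_mem ha]; omega) (hσ a ha).1 (notMem_erase a A)
      (fun h => (hσ a ha).2 h.symm) hy
    have hca : c ∈ farSide G A a := mem_farSide_of_reachable (hσ a ha) hc
    rw [hfar, Set.mem_singleton_iff] at hca
    exact hca ▸ hcy

theorem nonempty_iso_kssMinusPM_of_isIndep (hk : 3 ≤ k) (hG : KConnected G k)
    (hcut : ∀ S : Finset V, IsIndep G ↑S → #S = k → IsVertexCut G ↑S)
    (hAind : IsIndep G ↑A) (hA : #A = k + 1) : Nonempty (G ≃g KssMinusPM (k + 1)) := by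
  have hfar : ∀ a ∈ A, (farSide G A a).Nonempty := fun a ha => farSide_nonempty <|
    hcut _ (Set.Pairwise.mono (coe_subset.2 (erase_subset a A)) hAind)
      (by rw [card_erase_of_mem ha, hA, Nat.add_sub_cancel])
  choose! β hβ using hfar
  have hN := fun a (ha : a ∈ A) => neighborSet_eq_image hk hG hA hcut hβ ha
  have hNβ := fun a (ha : a ∈ A) => neighborSet_eq_erase hk hG hA hcut hβ ha
  have hconn : G.Preconnected := fun u v =>
    (hG.reachable (S := ∅) (by rw [card_empty]; omega) (notMem_empty u) (notMem_empty v)).mono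
      (removeVerts_le _)
  exact nonempty_iso_kssMinusPM hA (injOn_of_mem_farSide hG hA.le hβ)
    (fun a ha => notMem_of_mem_farSide (hβ a ha))
    (mem_or_exists_eq_of_neighborSet hconn (card_pos.1 (by omega)) hN hNβ) hN hNβ

end FarSide

theorem stmt0 (k : ℕ) (hk : 3 ≤ k) (V : Type) [Fintype V] (G : SimpleGraph V) :
    (KConnected G k ∧ (∃ S : Finset V, IsIndep G ↑S ∧ k < S.card) ∧
      (∀ S : Finset V, IsIndep G ↑S → S.card = k → IsVertexCut G ↑S)) ↔
    Nonempty (G ≃g KssMinusPM (k + 1)) := by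
  classical
  constructor
  · rintro ⟨hG, ⟨S, hS, hSk⟩, hcut⟩
    obtain ⟨A, hAS, hA⟩ := Finset.exists_subset_card_eq (show k + 1 ≤ S.card by omega)
    exact nonempty_iso_kssMinusPM_of_isIndep hk hG hcut
      (Set.Pairwise.mono (Finset.coe_subset.2 hAS) hS) hA
  · rintro ⟨e⟩
    refine ⟨(KssMinusPM.kConnected hk).of_iso e,
      ⟨(Finset.univ.map .inl).map e.symm.toEquiv.toEmbedding, ?_, by simp⟩, fun S hS hSk => ?_⟩
    · rw [Finset.coe_map]
      exact (isIndep_image_iff e.symm _).2 KssMinusPM.isIndep_map_inl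
    · have hS' : IsIndep (KssMinusPM (k + 1)) ↑(S.map e.toEquiv.toEmbedding) := by
        rw [Finset.coe_map]
        exact (isIndep_image_iff e _).2 hS
      have := KssMinusPM.isVertexCut_of_isIndep hS' (by simp; omega) (by simp [hSk])
      rw [Finset.coe_map] at this
      exact (isVertexCut_image_iff e _).1 this
end

section
/- Let k ≥ 3 and let G be a k-connected graph with independence number greater than k such that every independent set of cardinality k is a vertex cut of G. Then G has at least 2k+2 vertices. -/
/-!
If `G` had at most `2k + 1` vertices, take an independent set `A` of size `k + 1`. Every vertex
has degree at least `k` (a smaller neighbourhood would be a vertex cut), and a vertex of `A` has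
all its neighbours among the at most `k` vertices outside `A`; so each vertex of `A` is adjacent
to everything outside `A`. Removing `A` minus one vertex `v` then leaves a graph in which `v` is
adjacent to every other vertex, so this independent `k`-set is not a vertex cut.
-/

open SimpleGraph

namespace SimpleGraph

variable {V : Type*} {G : SimpleGraph V}

theorem preconnected_induce_compl_of_forall_adj {S : Set V} {v : V} (hv : v ∉ S)
    (hadj : ∀ w ∉ S, w ≠ v → G.Adj v w) : (G.induce Sᶜ).Preconnected := by
  have reach_v : ∀ z : (Sᶜ : Set V), (G.induce Sᶜ).Reachable z ⟨v, hv⟩ := by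
    rintro ⟨z, hz⟩
    by_cases hzv : z = v
    · subst hzv
      rfl
    · exact Adj.reachable (by simpa using (hadj z hz hzv).symm)
  exact fun x y => (reach_v x).trans (reach_v y).symm

end SimpleGraph

section

variable {V : Type*} {G : SimpleGraph V}

theorem isVertexCut_neighborSet {v w : V} (hvw : v ≠ w) (hw : ¬ G.Adj v w) :
    IsVertexCut G (G.neighborSet v) := by
  intro hpre
  obtain ⟨p⟩ := hpre ⟨v, by simp⟩ ⟨w, by simpa using hw⟩
  cases p with
  | nil => exact hvw rfl
  | @cons _ u _ huv _ => exact u.2 (by simpa using huv)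

theorem KConnected.le_degree [Fintype V] [DecidableRel G.Adj] {k : ℕ} (hG : KConnected G k)
    (v : V) : k ≤ G.degree v := by
  classical
  by_contra! hlt
  have hclosed : (insert v (G.neighborFinset v)).card < Fintype.card V :=
    (Finset.card_insert_le _ _).trans_lt (by rw [card_neighborFinset_eq_degree]; linarith [hG.1])
  obtain ⟨w, -, hw⟩ := Finset.exists_mem_notMem_of_card_lt_card
    (hclosed.trans_le (Finset.card_univ (α := V)).ge)
  rw [Finset.mem_insert, mem_neighborFinset, not_or] at hw
  exact hG.2 (G.neighborFinset v) hlt (by simpa using isVertexCut_neighborSet (Ne.symm hw.1) hw.2)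

theorem IsIndep.adj_of_card_le_card_add_degree [Fintype V] [DecidableEq V] [DecidableRel G.Adj]
    {A : Finset V} {δ : ℕ} (hA : IsIndep G ↑A) (hdeg : ∀ v, δ ≤ G.degree v)
    (hcard : Fintype.card V ≤ A.card + δ) {a b : V} (ha : a ∈ A) (hb : b ∉ A) : G.Adj a b := by
  have hsub : G.neighborFinset a ⊆ Aᶜ := fun x hx => by
    rw [mem_neighborFinset] at hx
    exact Finset.mem_compl.2 fun hxA => hA ha hxA (G.ne_of_adj hx) hx
  have heq : G.neighborFinset a = Aᶜ := by
    refine Finset.eq_of_subset_of_card_le hsub ?_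
    rw [Finset.card_compl, card_neighborFinset_eq_degree]
    have := hdeg a
    omega
  simpa [← mem_neighborFinset, heq] using hb

end

theorem stmt1_general (k : ℕ) (V : Type) [Fintype V] (G : SimpleGraph V)
    (hconn : KConnected G k) (hindep : ∃ S : Finset V, IsIndep G ↑S ∧ k < S.card)
    (hcut : ∀ S : Finset V, IsIndep G ↑S → S.card = k → IsVertexCut G ↑S) :
    2 * k + 2 ≤ Fintype.card V := by
  classical
  by_contra! hV
  obtain ⟨S, hSind, hScard⟩ := hindep
  obtain ⟨A, hAS, hAcard⟩ := Finset.exists_subset_card_eq (s := S) (n := k + 1) hScard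
  have hAind : IsIndep G ↑A := hSind.mono (by exact_mod_cast hAS)
  obtain ⟨v, hv⟩ : A.Nonempty := Finset.card_pos.mp (by omega)
  have hcomplete : ∀ b ∉ A, G.Adj v b :=
    fun b hb => hAind.adj_of_card_le_card_add_degree hconn.le_degree (by omega) hv hb
  apply hcut (A.erase v) (hAind.mono (by simp)) (by rw [Finset.card_erase_of_mem hv]; omega)
  refine preconnected_induce_compl_of_forall_adj (by simp) fun w hw hwv => hcomplete w ?_
  simpa [hwv] using hw

theorem stmt1 (k : ℕ) (hk : 3 ≤ k) (V : Type) [Fintype V] (G : SimpleGraph V)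
    (hconn : KConnected G k) (hindep : ∃ S : Finset V, IsIndep G ↑S ∧ k < S.card)
    (hcut : ∀ S : Finset V, IsIndep G ↑S → S.card = k → IsVertexCut G ↑S) :
    2 * k + 2 ≤ Fintype.card V :=
  stmt1_general k V G hconn hindep hcut
end

section
/- Let k ≥ 3 and let G be a k-connected graph such that every independent set of cardinality k is a vertex cut of G, and suppose G has an independent set A = {x_1, ..., x_{k+1}} of size k+1. For each i, let G_i be the union of all components of G - (A \ {x_i}) other than the component containing x_i. Then for all i ≠ j, V(G_i) and V(G_j) are disjoint and there is no edge between G_i and G_j. -/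
open SimpleGraph

/-- The set of vertices of `G - S` lying in components other than the one containing `x`:
vertices outside `S` that are not reachable from `x` in `G - S`. -/
def outsideComponent {V : Type*} (G : SimpleGraph V) (S : Set V) (x : V) : Set V :=
  {v | ∃ hv : v ∈ Sᶜ, ∀ hx : x ∈ Sᶜ, ¬ (G.induce Sᶜ).Reachable ⟨v, hv⟩ ⟨x, hx⟩}

private lemma mem_of_walk {V : Type*} {G : SimpleGraph V} {t D : Set V}
    (hcl : ∀ w ∈ D, ∀ w' ∈ t, G.Adj w w' → w' ∈ D) :
    ∀ {a b : ↥t}, (G.induce t).Walk a b → ↑a ∈ D → ↑b ∈ D := by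
  intro a b p
  induction p with
  | nil => exact id
  | @cons u c b h p ih => exact fun ha => ih (hcl _ ha _ c.2 h)

private lemma reach_transfer {V : Type*} {G : SimpleGraph V} {s t : Set V} :
    ∀ {a b : ↥s}, (G.induce s).Walk a b →
      (∀ c : ↥s, (G.induce s).Reachable a c → ↑c ∈ t) →
      ∃ (ha : ↑a ∈ t) (hb : ↑b ∈ t),
        (G.induce t).Reachable ⟨↑a, ha⟩ ⟨↑b, hb⟩ := by
  intro a b p
  induction p with
  | nil =>
    exact fun hyp => ⟨hyp _ (Reachable.refl _), hyp _ (Reachable.refl _), Reachable.refl _⟩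
  | @cons u c b h p ih =>
    intro hyp
    obtain ⟨hc, hb, r⟩ := ih (fun w hw => hyp w ((Adj.reachable h).trans hw))
    refine ⟨hyp _ (Reachable.refl _), hb, Reachable.trans ?_ r⟩
    exact Adj.reachable (by exact h)

private lemma claim1 {k : ℕ} (hk : 3 ≤ k) {V : Type} [Fintype V] {G : SimpleGraph V}
    (hconn : KConnected G k)
    {x : Fin (k + 1) → V} (hinj : Function.Injective x)
    {i j : Fin (k + 1)} (hij : i ≠ j) {v : V}
    (hvi : v ∈ outsideComponent G (x '' {l | l ≠ i}) (x i)) :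
    v ∉ outsideComponent G (x '' {l | l ≠ j}) (x j) := by
  classical
  intro hvj
  obtain ⟨hvs, hnr⟩ := hvi
  set s : Set V := (x '' {l | l ≠ i})ᶜ with hs
  have hxi : x i ∈ s := by
    rintro ⟨l, hl, he⟩
    exact hl (hinj he)
  set D : Set V := {w | ∃ hw : w ∈ s, (G.induce s).Reachable ⟨v, hvs⟩ ⟨w, hw⟩} with hD
  have hvD : v ∈ D := ⟨hvs, Reachable.refl _⟩
  have hxiD : x i ∉ D := fun ⟨hw, hr⟩ => hnr hxi hr
  have hDs : D ⊆ s := fun w hw => hw.1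
  have hclD : ∀ w ∈ D, ∀ w', w' ∈ s → G.Adj w w' → w' ∈ D := by
    rintro w ⟨hw, hr⟩ w' hw' hadj
    exact ⟨hw', hr.trans (Adj.reachable
      (by exact hadj : (G.induce s).Adj ⟨w, hw⟩ ⟨w', hw'⟩))⟩
  -- Step 1: x j has a neighbor in D
  have hnb : ∃ w ∈ D, G.Adj w (x j) := by
    by_contra hno
    push_neg at hno
    set T : Finset V := Finset.image x ({i, j}ᶜ) with hT
    have hTcard : T.card < k := by
      rw [hT, Finset.card_image_of_injective _ hinj, Finset.card_compl]
      have h2 : ({i, j} : Finset (Fin (k + 1))).card = 2 := by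
        rw [Finset.card_insert_of_notMem (by simp [hij]), Finset.card_singleton]
      rw [h2, Fintype.card_fin]
      omega
    have hpc : (G.induce (↑T : Set V)ᶜ).Preconnected := by
      have := hconn.2 T hTcard
      unfold IsVertexCut at this
      exact not_not.mp this
    have hTs : (↑T : Set V) ⊆ x '' {l | l ≠ i} := by
      rw [hT, Finset.coe_image]
      rintro _ ⟨l, hl, rfl⟩
      refine ⟨l, ?_, rfl⟩
      simp only [Finset.coe_compl, Set.mem_compl_iff, Finset.coe_insert,
        Finset.mem_coe, Finset.mem_insert, Finset.mem_singleton] at hl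
      exact fun hli => hl (Or.inl hli)
    have hsub : s ⊆ (↑T : Set V)ᶜ := fun w hw hmem => hw (hTs hmem)
    have hclT : ∀ w ∈ D, ∀ w' ∈ (↑T : Set V)ᶜ, G.Adj w w' → w' ∈ D := by
      intro w hwD w' hw' hadj
      by_cases hw's : w' ∈ s
      · exact hclD w hwD w' hw's hadj
      · have hw'mem : w' ∈ x '' {l | l ≠ i} := not_not.mp hw's
        obtain ⟨l, hl, rfl⟩ := hw'mem
        have hlj : l = j := by
          by_contra hlj
          refine hw' ?_
          rw [hT, Finset.coe_image]
          exact ⟨l, by simp [hlj]; exact hl, rfl⟩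
        subst hlj
        exact absurd hadj (hno w hwD)
    obtain ⟨p⟩ := hpc ⟨v, hsub hvs⟩ ⟨x i, hsub hxi⟩
    exact hxiD (mem_of_walk hclT p hvD)
  obtain ⟨w, hwD, hadj⟩ := hnb
  -- Step 2: transfer reachability to G - (A \ {x j})
  have hDt2 : ∀ c ∈ D, c ∈ (x '' {l | l ≠ j})ᶜ := by
    rintro c ⟨hcs, hcr⟩ ⟨l, hl, rfl⟩
    by_cases hli : l = i
    · subst hli; exact hxiD ⟨hcs, hcr⟩
    · exact hcs ⟨l, hli, rfl⟩
  obtain ⟨hws, hwr⟩ := hwD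
  obtain ⟨p⟩ := hwr
  obtain ⟨hvt2, hwt2, r⟩ := reach_transfer p (fun c hc => hDt2 ↑c ⟨c.2, hc⟩)
  have hxjt2 : x j ∈ (x '' {l | l ≠ j})ᶜ := by
    rintro ⟨l, hl, he⟩
    exact hl (hinj he)
  have hadj2 : (G.induce (x '' {l | l ≠ j})ᶜ).Adj ⟨w, hwt2⟩ ⟨x j, hxjt2⟩ := hadj
  obtain ⟨hvj1, hvj2⟩ := hvj
  exact hvj2 hxjt2 (r.trans hadj2.reachable)

theorem stmt2 (k : ℕ) (hk : 3 ≤ k) (V : Type) [Fintype V] (G : SimpleGraph V)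
    (hconn : KConnected G k)
    (hcut : ∀ S : Finset V, IsIndep G ↑S → S.card = k → IsVertexCut G ↑S)
    (x : Fin (k + 1) → V) (hinj : Function.Injective x)
    (hA : IsIndep G (Set.range x)) :
    ∀ i j : Fin (k + 1), i ≠ j →
      outsideComponent G (x '' {l | l ≠ i}) (x i) ∩
        outsideComponent G (x '' {l | l ≠ j}) (x j) = ∅ ∧
      ∀ u ∈ outsideComponent G (x '' {l | l ≠ i}) (x i),
        ∀ v ∈ outsideComponent G (x '' {l | l ≠ j}) (x j), ¬ G.Adj u v := by
  intro i j hij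
  constructor
  · ext v
    simp only [Set.mem_inter_iff, Set.mem_empty_iff_false, iff_false, not_and]
    exact fun h1 => claim1 hk hconn hinj hij h1
  · intro u hu v hv hadj
    have huj := claim1 hk hconn hinj hij hu
    obtain ⟨hus, hur⟩ := hu
    obtain ⟨hvs, hvr⟩ := hv
    have hune : u ≠ x i := by
      rintro rfl
      exact hur (by rintro ⟨l, hl, he⟩; exact hl (hinj he)) (Reachable.refl _)
    have hut2 : u ∈ (x '' {l | l ≠ j})ᶜ := by
      rintro ⟨l, hl, rfl⟩
      by_cases hli : l = i
      · subst hli; exact hune rfl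
      · exact hus ⟨l, hli, rfl⟩
    have hxjt2 : x j ∈ (x '' {l | l ≠ j})ᶜ := by
      rintro ⟨l, hl, he⟩
      exact hl (hinj he)
    have hreach : (G.induce (x '' {l | l ≠ j})ᶜ).Reachable ⟨u, hut2⟩ ⟨x j, hxjt2⟩ := by
      by_contra hnr
      exact huj ⟨hut2, fun _ => hnr⟩
    have hadj2 : (G.induce (x '' {l | l ≠ j})ᶜ).Adj ⟨v, hvs⟩ ⟨u, hut2⟩ := hadj.symm
    exact hvr hxjt2 (hadj2.reachable.trans hreach)
end

section
/- Let k ≥ 3 and let G be a k-connected graph such that every independent set of cardinality k is a vertex cut, with an independent set A = {x_1, ..., x_{k+1}}. Let G_i be the union of all components of G - (A \ {x_i}) not containing x_i. Then V(G) = A ∪ V(G_1) ∪ ... ∪ V(G_{k+1}). -/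
open SimpleGraph

/-!
Suppose `v ∉ A` reaches every `x i` in `G - (A \ {x i})`. Each `A \ {x i}` is an independent
`k`-set, hence a cut, separating some `z i` from `x i`. As `G - (A \ {x i, x j})` is connected,
the component of `z j` in `G - A` is attached to every `x i` with `i ≠ j`; so the `z i` lie in
pairwise distinct components of `G - A`, none of them containing `v`. Then `z 1, …, z k` form an
independent `k`-set, but `G` minus it stays connected: every vertex reaches `A` while avoiding
it, and `v` reaches all of `A`.
-/

namespace SimpleGraph

variable {V : Type*} {G : SimpleGraph V} {S T A : Set V} {a b c x y : V}

/-- Connectivity in `G - S`, phrased with walks of `G` so as to avoid the subtype `Sᶜ`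
(see `reachableAvoiding_iff_reachable_induce`). -/
def ReachableAvoiding (G : SimpleGraph V) (S : Set V) (a b : V) : Prop :=
  ∃ p : G.Walk a b, ∀ w ∈ p.support, w ∉ S

namespace ReachableAvoiding

lemma refl (ha : a ∉ S) : G.ReachableAvoiding S a a :=
  ⟨.nil, by simpa using ha⟩

lemma left_notMem (h : G.ReachableAvoiding S a b) : a ∉ S :=
  h.elim fun p hp => hp a p.start_mem_support

lemma right_notMem (h : G.ReachableAvoiding S a b) : b ∉ S :=
  h.elim fun p hp => hp b p.end_mem_support

lemma symm (h : G.ReachableAvoiding S a b) : G.ReachableAvoiding S b a := by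
  obtain ⟨p, hp⟩ := h
  exact ⟨p.reverse, fun w hw => hp w (by simpa using hw)⟩

lemma trans (hab : G.ReachableAvoiding S a b) (hbc : G.ReachableAvoiding S b c) :
    G.ReachableAvoiding S a c := by
  obtain ⟨p, hp⟩ := hab
  obtain ⟨q, hq⟩ := hbc
  refine ⟨p.append q, fun w hw => ?_⟩
  rcases Walk.mem_support_append_iff p q |>.mp hw with hw | hw
  exacts [hp w hw, hq w hw]

lemma mono (hST : S ⊆ T) (h : G.ReachableAvoiding T a b) : G.ReachableAvoiding S a b := by
  obtain ⟨p, hp⟩ := h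
  exact ⟨p, fun w hw hwS => hp w hw (hST hwS)⟩

lemma trans_adj (h : G.ReachableAvoiding S a b) (hbc : G.Adj b c) (hc : c ∉ S) :
    G.ReachableAvoiding S a c :=
  h.trans ⟨.cons hbc .nil, by simp [h.right_notMem, hc]⟩

/-- Each vertex of the walk is reached from `a` along a prefix. -/
lemma union_of_forall_not (h : G.ReachableAvoiding A a b)
    (hS : ∀ s ∈ S, ¬ G.ReachableAvoiding A a s) : G.ReachableAvoiding (A ∪ S) a b := by
  classical
  obtain ⟨p, hp⟩ := h
  refine ⟨p, fun w hw hwAS => ?_⟩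
  rcases hwAS with hwA | hwS
  · exact hp w hw hwA
  · exact hS w hwS
      ⟨p.takeUntil w hw, fun u hu => hp u (p.support_takeUntil_subset_support hw hu)⟩

/-- Cut the walk at its first visit `y` to `A`. -/
lemma union_or_exists_adj (h : G.ReachableAvoiding T a b) (ha : a ∉ A) :
    G.ReachableAvoiding (A ∪ T) a b ∨
      ∃ c y, y ∈ A \ T ∧ G.ReachableAvoiding (A ∪ T) a c ∧ G.Adj c y := by
  obtain ⟨p, hp⟩ := h
  induction p with
  | nil =>
    exact .inl (refl fun haAT => haAT.elim ha (hp _ (by simp)))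
  | @cons a d b had q ih =>
    have haT : a ∉ T := hp a (by simp)
    have hdT : d ∉ T := hp d (by simp)
    by_cases hdA : d ∈ A
    · exact .inr ⟨a, d, ⟨hdA, hdT⟩, refl fun h => h.elim ha haT, had⟩
    · have had' : G.ReachableAvoiding (A ∪ T) a d :=
        (refl fun h => h.elim ha haT).trans_adj had fun h => h.elim hdA hdT
      rcases ih hdA (fun w hw => hp w (by simp [hw])) with hdb | ⟨c, y, hy, hdc, hcy⟩
      · exact .inl (had'.trans hdb)
      · exact .inr ⟨c, y, hy, had'.trans hdc, hcy⟩

end ReachableAvoiding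

lemma reachableAvoiding_iff_reachable_induce (ha : a ∈ Sᶜ) (hb : b ∈ Sᶜ) :
    G.ReachableAvoiding S a b ↔ (G.induce Sᶜ).Reachable ⟨a, ha⟩ ⟨b, hb⟩ := by
  constructor
  · rintro ⟨p, hp⟩
    exact ⟨p.induce Sᶜ hp⟩
  · rintro ⟨p⟩
    refine ⟨p.map (Embedding.induce Sᶜ).toHom, fun w hw => ?_⟩
    obtain ⟨u, -, rfl⟩ := List.mem_map.mp (Walk.support_map _ p ▸ hw)
    exact u.2

lemma reachableAvoiding_sdiff_singleton_iff (ha : a ∉ A) (hx : x ∈ A) :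
    G.ReachableAvoiding (A \ {x}) a x ↔ ∃ c, G.ReachableAvoiding A a c ∧ G.Adj c x := by
  constructor
  · intro h
    rcases h.union_or_exists_adj ha with h | ⟨c, y, hy, hac, hcy⟩
    · exact absurd hx (h.right_notMem <| .inl ·)
    · obtain rfl : y = x := by simpa [hy.1] using hy.2
      exact ⟨c, hac.mono Set.subset_union_left, hcy⟩
  · rintro ⟨c, hac, hcx⟩
    exact (hac.mono Set.sdiff_subset).trans_adj hcx fun h => h.2 rfl

lemma reachableAvoiding_sdiff_singleton_of_sdiff_pair (ha : a ∉ A) (hx : x ∈ A) (hy : y ∈ A)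
    (h : G.ReachableAvoiding (A \ {x, y}) a y) (hy' : ¬ G.ReachableAvoiding (A \ {y}) a y) :
    G.ReachableAvoiding (A \ {x}) a x := by
  rcases h.union_or_exists_adj ha with h | ⟨c, w, hw, hac, hcw⟩
  · exact absurd hy (h.right_notMem <| .inl ·)
  · have hac' : G.ReachableAvoiding A a c := hac.mono Set.subset_union_left
    obtain rfl | rfl : w = x ∨ w = y := by
      by_contra! hne
      exact hw.2 ⟨hw.1, by simp [hne.1, hne.2]⟩
    · exact (reachableAvoiding_sdiff_singleton_iff ha hx).mpr ⟨c, hac', hcw⟩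
    · exact absurd ((reachableAvoiding_sdiff_singleton_iff ha hy).mpr ⟨c, hac', hcw⟩) hy'

end SimpleGraph

open SimpleGraph.ReachableAvoiding

section

variable {V : Type*} {G : SimpleGraph V} {S A : Set V} {a b : V}

lemma IsVertexCut.exists_not_reachableAvoiding (h : IsVertexCut G S) (hx : a ∉ S) :
    ∃ z ∉ S, ¬ G.ReachableAvoiding S z a := by
  obtain ⟨u, w, huw⟩ : ∃ u w, ¬ (G.induce Sᶜ).Reachable u w := by
    simpa [IsVertexCut, Preconnected] using h
  by_contra! hreach
  exact huw (((reachableAvoiding_iff_reachable_induce u.2 hx).mp (hreach u u.2)).trans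
    ((reachableAvoiding_iff_reachable_induce w.2 hx).mp (hreach w w.2)).symm)

variable [Fintype V] {k : ℕ}

lemma KConnected.reachableAvoiding (hG : KConnected G k)
    (hS : S.ncard < k) (ha : a ∉ S) (hb : b ∉ S) : G.ReachableAvoiding S a b := by
  classical
  have hpre := hG.2 S.toFinset (by rwa [← Set.ncard_eq_toFinset_card'])
  rw [IsVertexCut, not_not, Set.coe_toFinset] at hpre
  exact (reachableAvoiding_iff_reachable_induce ha hb).mpr (hpre _ _)

/-- A vertex `u ∉ A ∪ S` is joined to `v` by a walk avoiding the at most one vertex of `S` in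
its component of `G - A`; this walk avoids all of `S` until it first meets `A`. -/
lemma KConnected.not_isVertexCut (hG : KConnected G k) (hk : 2 ≤ k)
    {S : Finset V} {v : V} (hv : v ∉ S)
    (hsep : ∀ s ∈ S, ∀ t ∈ S, G.ReachableAvoiding A s t → s = t)
    (hvA : ∀ a ∈ A, G.ReachableAvoiding S v a) : ¬ IsVertexCut G S := by
  classical
  suffices h : ∀ u ∉ S, G.ReachableAvoiding S u v by
    rw [IsVertexCut, not_not]
    rintro ⟨a, ha⟩ ⟨b, hb⟩
    exact (reachableAvoiding_iff_reachable_induce ha hb).mp ((h a ha).trans (h b hb).symm)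
  intro u hu
  by_cases huA : u ∈ A
  · exact (hvA u huA).symm
  set T := S.filter (G.ReachableAvoiding A u ·)
  have hTS : ∀ s ∈ S, ¬ G.ReachableAvoiding (A ∪ T) u s := fun s hs h =>
    h.right_notMem (.inr (Finset.mem_filter.mpr ⟨hs, h.mono Set.subset_union_left⟩))
  have hT : (T : Set V).ncard < k := by
    have : T.card ≤ 1 := Finset.card_le_one.mpr fun s hs t ht =>
      hsep s (Finset.mem_filter.mp hs).1 t (Finset.mem_filter.mp ht).1
        ((Finset.mem_filter.mp hs).2.symm.trans (Finset.mem_filter.mp ht).2)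
    rw [Set.ncard_coe_finset]
    omega
  have huv := hG.reachableAvoiding hT (fun h => hu (Finset.mem_filter.mp h).1)
    (fun h => hv (Finset.mem_filter.mp h).1)
  rcases huv.union_or_exists_adj huA with huv | ⟨c, y, hy, huc, hcy⟩
  · exact (huv.union_of_forall_not hTS).mono Set.subset_union_right
  · have hyv := hvA y hy.1
    exact (((huc.union_of_forall_not hTS).mono Set.subset_union_right).trans_adj hcy
      hyv.right_notMem).trans hyv.symm

lemma KConnected.exists_separated_family (hconn : KConnected G k)
    (hcut : ∀ S : Finset V, IsIndep G ↑S → S.card = k → IsVertexCut G ↑S)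
    {x : Fin (k + 1) → V} (hinj : Function.Injective x) (hA : IsIndep G (Set.range x)) :
    ∃ z : Fin (k + 1) → V, (∀ i, z i ∉ Set.range x) ∧
      (∀ i, ¬ G.ReachableAvoiding (Set.range x \ {x i}) (z i) (x i)) ∧
      ∀ i j, G.ReachableAvoiding (Set.range x) (z i) (z j) → i = j := by
  classical
  set A := Set.range x
  have hxA : ∀ i, x i ∈ A := Set.mem_range_self
  have hcardA : A.ncard = k + 1 := by
    rw [Set.ncard_range_of_injective hinj, Nat.card_eq_fintype_card, Fintype.card_fin]
  have hz : ∀ i, ∃ z ∉ A, ¬ G.ReachableAvoiding (A \ {x i}) z (x i) := by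
    intro i
    have hcut_i : IsVertexCut G (A \ {x i}) := by
      simpa using hcut (A \ {x i}).toFinset (by rw [Set.coe_toFinset]; exact hA.mono Set.sdiff_subset)
        (by rw [← Set.ncard_eq_toFinset_card', Set.ncard_sdiff_singleton_of_mem (hxA i), hcardA]
            rfl)
    obtain ⟨z, hzA, hz⟩ := hcut_i.exists_not_reachableAvoiding (fun h => h.2 rfl)
    refine ⟨z, fun h => hzA ⟨h, ?_⟩, hz⟩
    rintro rfl
    exact hz (refl hzA)
  choose z hzA hz using hz
  have hzx : ∀ i j, i ≠ j → G.ReachableAvoiding (A \ {x i}) (z j) (x i) := by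
    intro i j hij
    refine reachableAvoiding_sdiff_singleton_of_sdiff_pair (hzA j) (hxA i) (hxA j) ?_ (hz j)
    refine hconn.reachableAvoiding ?_ (fun h => hzA j h.1) (fun h => h.2 (by simp))
    rw [Set.ncard_sdiff (by simp [Set.insert_subset_iff, hxA]), Set.ncard_pair (hinj.ne hij),
      hcardA]
    omega
  refine ⟨z, hzA, hz, fun i j h => ?_⟩
  by_contra hij
  exact hz i ((h.mono Set.sdiff_subset).trans (hzx i j hij))

lemma KConnected.exists_not_reachableAvoiding_sdiff (hconn : KConnected G k) (hk : 2 ≤ k)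
    (hcut : ∀ S : Finset V, IsIndep G ↑S → S.card = k → IsVertexCut G ↑S)
    {x : Fin (k + 1) → V} (hinj : Function.Injective x) (hA : IsIndep G (Set.range x))
    {v : V} (hv : v ∉ Set.range x) :
    ∃ i, ¬ G.ReachableAvoiding (Set.range x \ {x i}) v (x i) := by
  classical
  by_contra! hall
  obtain ⟨z, hzA, hz, hsep⟩ := hconn.exists_separated_family hcut hinj hA
  have hvz : ∀ i, ¬ G.ReachableAvoiding (Set.range x) v (z i) := fun i h =>
    hz i ((h.symm.mono Set.sdiff_subset).trans (hall i))
  set S := (Finset.univ.erase 0).image z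
  have hmemS : ∀ {s}, s ∈ S → ∃ i, z i = s := fun hs => by
    obtain ⟨i, -, rfl⟩ := Finset.mem_image.mp hs
    exact ⟨i, rfl⟩
  have hvA : ∀ a ∈ Set.range x, G.ReachableAvoiding S v a := by
    rintro _ ⟨i, rfl⟩
    obtain ⟨c, hvc, hcx⟩ :=
      (reachableAvoiding_sdiff_singleton_iff hv (Set.mem_range_self i)).mp (hall i)
    refine ((hvc.union_of_forall_not fun s hs => ?_).mono Set.subset_union_right).trans_adj hcx
      fun hs => ?_
    · obtain ⟨j, rfl⟩ := hmemS hs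
      exact hvz j
    · obtain ⟨j, hj⟩ := hmemS hs
      exact hzA j (hj ▸ Set.mem_range_self i)
  refine hconn.not_isVertexCut hk (fun hvS => ?_) (fun s hs t ht hst => ?_) hvA (hcut S ?_ ?_)
  · obtain ⟨i, rfl⟩ := hmemS hvS
    exact hvz i (refl hv)
  · obtain ⟨i, rfl⟩ := hmemS hs
    obtain ⟨j, rfl⟩ := hmemS ht
    rw [hsep i j hst]
  · rintro s hs t ht hne hadj
    obtain ⟨i, rfl⟩ := hmemS hs
    obtain ⟨j, rfl⟩ := hmemS ht
    exact hne (congrArg z (hsep i j ((refl (hzA i)).trans_adj hadj (hzA j))))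
  · have hzinj : Function.Injective z := fun i j h => hsep i j (h ▸ refl (hzA i))
    simp [S, Finset.card_image_of_injective _ hzinj]

end

theorem stmt3 (k : ℕ) (hk : 3 ≤ k) (V : Type) [Fintype V] (G : SimpleGraph V)
    (hconn : KConnected G k)
    (hcut : ∀ S : Finset V, IsIndep G ↑S → S.card = k → IsVertexCut G ↑S)
    (x : Fin (k + 1) → V) (hinj : Function.Injective x)
    (hA : IsIndep G (Set.range x)) :
    Set.range x ∪ (⋃ i : Fin (k + 1), outsideComponent G (x '' {l | l ≠ i}) (x i)) =
      Set.univ := by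
  refine Set.eq_univ_of_forall fun v => ?_
  by_cases hv : v ∈ Set.range x
  · exact .inl hv
  obtain ⟨i, hi⟩ := hconn.exists_not_reachableAvoiding_sdiff (by omega) hcut hinj hA hv
  have himage : x '' {l | l ≠ i} = Set.range x \ {x i} := by
    rw [← Set.compl_singleton_eq, Set.image_compl_eq_range_sdiff_image hinj, Set.image_singleton]
  refine .inr (Set.mem_iUnion.mpr ⟨i, ?_⟩)
  rw [outsideComponent, himage]
  exact ⟨fun h => hv h.1, fun hx h => hi ((reachableAvoiding_iff_reachable_induce _ hx).mpr h)⟩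
end

section
/- Let k ≥ 3 and let G be a k-connected graph such that every independent set of cardinality k is a vertex cut, with an independent set A = {x_1, ..., x_{k+1}}. Let G_i be the union of all components of G - (A \ {x_i}) not containing x_i. Then |V(G_i)| = 1 for every i with 1 ≤ i ≤ k+1. -/
open SimpleGraph

set_option linter.unusedSectionVars false
namespace Stmt4Aux

variable {V : Type*} (G : SimpleGraph V)

/-- connectivity within a vertex set `T` -/
def Conn (T : Set V) (a b : V) : Prop :=
  Relation.ReflTransGen (fun p q => G.Adj p q ∧ p ∈ T ∧ q ∈ T) a b

/-- external neighborhood -/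
def nbhd (F : Set V) : Set V := {z | z ∉ F ∧ ∃ w ∈ F, G.Adj w z}

variable {G}

lemma conn_refl {T : Set V} (a : V) : Conn G T a a := Relation.ReflTransGen.refl

lemma conn_trans {T : Set V} {a b c : V} (h1 : Conn G T a b) (h2 : Conn G T b c) :
    Conn G T a c := h1.trans h2

lemma conn_symm {T : Set V} {a b : V} (h : Conn G T a b) : Conn G T b a := by
  induction h with
  | refl => exact conn_refl a
  | tail h1 h2 ih =>
      exact Relation.ReflTransGen.trans (Relation.ReflTransGen.single ⟨h2.1.symm, h2.2.2, h2.2.1⟩) ih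

lemma conn_mono {T T' : Set V} (hTT : T ⊆ T') {a b : V} (h : Conn G T a b) :
    Conn G T' a b := by
  induction h with
  | refl => exact conn_refl a
  | tail h1 h2 ih => exact ih.tail ⟨h2.1, hTT h2.2.1, hTT h2.2.2⟩

lemma conn_mem {T : Set V} {a b : V} (h : Conn G T a b) (ha : a ∈ T) : b ∈ T := by
  induction h with
  | refl => exact ha
  | tail h1 h2 ih => exact h2.2.2

lemma conn_single {T : Set V} {a b : V} (h : G.Adj a b) (ha : a ∈ T) (hb : b ∈ T) :
    Conn G T a b := Relation.ReflTransGen.single ⟨h, ha, hb⟩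

/-- all intermediate points of a `Conn` chain lie in the closure of `a` -/
lemma conn_cl {T : Set V} {a b : V} (h : Conn G T a b) :
    Conn G {w | Conn G T a w} a b := by
  induction h with
  | refl => exact conn_refl a
  | @tail b c h1 h2 ih =>
      exact ih.tail ⟨h2.1, h1, h1.tail h2⟩

lemma reachable_iff_conn {T : Set V} {a b : V} (ha : a ∈ T) (hb : b ∈ T) :
    (G.induce T).Reachable ⟨a, ha⟩ ⟨b, hb⟩ ↔ Conn G T a b := by
  constructor
  · intro h
    obtain ⟨p⟩ := h
    have key : ∀ (u v : T) (_ : (G.induce T).Walk u v), Conn G T u v := by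
      intro u v p
      induction p with
      | nil => exact conn_refl _
      | @cons u w v h p ih =>
          exact Relation.ReflTransGen.head ⟨h, u.2, w.2⟩ ih
    exact key _ _ p
  · intro h
    have key : ∀ (c : V), Conn G T c b → ∀ (hc : c ∈ T),
        (G.induce T).Reachable ⟨c, hc⟩ ⟨b, hb⟩ := by
      intro c hcb
      induction hcb using Relation.ReflTransGen.head_induction_on with
      | refl => intro hc; rfl
      | head h' hrest ih =>
          intro hc
          exact (Reachable.refl _).trans
            (((by exact SimpleGraph.Adj.reachable (by simpa using h'.1) : (G.induce T).Reachable ⟨_, h'.2.1⟩ ⟨_, h'.2.2⟩)).trans (ih h'.2.2))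
    exact key a h ha

variable {V : Type*} [Fintype V] {G : SimpleGraph V} {k : ℕ}

lemma conn_stay {F : Set V} {a b : V} (h : Conn G (nbhd G F)ᶜ a b) (ha : a ∈ F) : b ∈ F := by
  induction h with
  | refl => exact ha
  | tail h1 h2 ih =>
      by_contra hb
      exact h2.2.2 ⟨hb, _, ih, h2.1⟩

lemma frag (hconn : KConnected G k) {F : Set V} {a0 b0 : V} (ha0 : a0 ∈ F)
    (hb0F : b0 ∉ F) (hb0N : b0 ∉ nbhd G F) : k ≤ (nbhd G F).ncard := by
  by_contra hlt
  push_neg at hlt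
  classical
  set S : Finset V := (nbhd G F).toFinset with hS
  have hcoe : (S : Set V) = nbhd G F := Set.coe_toFinset _
  have hcard : S.card < k := by
    rw [hS]; rwa [Set.ncard_eq_toFinset_card' (nbhd G F)] at hlt
  have hpre := hconn.2 S hcard
  rw [IsVertexCut, not_not] at hpre
  have haS : a0 ∈ (↑S : Set V)ᶜ := by
    rw [hcoe]; intro h; exact h.1 ha0
  have hbS : b0 ∈ (↑S : Set V)ᶜ := by rw [hcoe]; exact hb0N
  have := hpre ⟨a0, haS⟩ ⟨b0, hbS⟩
  rw [reachable_iff_conn haS hbS] at this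
  rw [show ((↑S : Set V)ᶜ) = (nbhd G F)ᶜ by rw [hcoe]] at this
  exact hb0F (conn_stay this ha0)


variable {k : ℕ} {V : Type} [Fintype V]

def Ai (x : Fin (k+1) → V) (i : Fin (k+1)) : Set V := x '' {l | l ≠ i}

def Gi (G : SimpleGraph V) (x : Fin (k+1) → V) (i : Fin (k+1)) : Set V :=
  outsideComponent G (Ai x i) (x i)

def clA (G : SimpleGraph V) (x : Fin (k+1) → V) (v : V) : Set V :=
  {w | Conn G (Set.range x)ᶜ v w}

variable {G : SimpleGraph V} {x : Fin (k+1) → V}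

section basic

lemma mem_Ai (hinj : Function.Injective x) {m i : Fin (k+1)} : x m ∈ Ai x i ↔ m ≠ i := by
  constructor
  · rintro ⟨l, hl, hlx⟩; rintro rfl; exact hl (hinj hlx)
  · intro h; exact ⟨m, h, rfl⟩

lemma Ai_eq_diff (hinj : Function.Injective x) (i : Fin (k+1)) : Ai x i = Set.range x \ {x i} := by
  ext v
  constructor
  · rintro ⟨l, hl, rfl⟩
    exact ⟨⟨l, rfl⟩, by simpa using fun h => hl (hinj h)⟩
  · rintro ⟨⟨l, rfl⟩, hv⟩
    exact ⟨l, by rintro rfl; exact hv rfl, rfl⟩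

lemma xi_notin_Ai (hinj : Function.Injective x) (i : Fin (k+1)) : x i ∉ Ai x i := by
  rw [mem_Ai hinj]; simp

lemma ncard_Ai (hinj : Function.Injective x) (i : Fin (k+1)) : (Ai x i).ncard = k := by
  have h1 : (Ai x i).ncard = ({l : Fin (k+1) | l ≠ i}).ncard :=
    Set.ncard_image_of_injective _ hinj
  have h2 : ({l : Fin (k+1) | l ≠ i}) = Set.univ \ {i} := by ext l; simp
  rw [h1, h2, Set.ncard_diff (Set.subset_univ _), Set.ncard_univ, Set.ncard_singleton]
  simp

lemma Ai_compl_mono (i : Fin (k+1)) : (Set.range x)ᶜ ⊆ (Ai x i)ᶜ := by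
  intro v hv hmem
  exact hv (by rcases hmem with ⟨l, _, rfl⟩; exact ⟨l, rfl⟩)

lemma mem_Gi (hinj : Function.Injective x) {v : V} {i : Fin (k+1)} :
    v ∈ Gi G x i ↔ v ∈ (Ai x i)ᶜ ∧ ¬ Conn G (Ai x i)ᶜ v (x i) := by
  have hxi : x i ∈ (Ai x i)ᶜ := xi_notin_Ai hinj i
  unfold Gi outsideComponent
  constructor
  · rintro ⟨hv, h⟩
    exact ⟨hv, fun hc => h hxi ((reachable_iff_conn hv hxi).mpr hc)⟩
  · rintro ⟨hv, h⟩
    exact ⟨hv, fun hx hr => h ((reachable_iff_conn hv hx).mp hr)⟩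

lemma Gi_not_range (hinj : Function.Injective x) {v : V} {i : Fin (k+1)} (hv : v ∈ Gi G x i) : v ∉ Set.range x := by
  rw [mem_Gi hinj] at hv
  rintro ⟨l, rfl⟩
  rcases eq_or_ne l i with rfl | hl
  · exact hv.2 (conn_refl _)
  · exact hv.1 ⟨l, hl, rfl⟩

lemma xi_notin_Gi (hinj : Function.Injective x) (i : Fin (k+1)) : x i ∉ Gi G x i := by
  intro h; exact Gi_not_range hinj h ⟨i, rfl⟩

lemma no_adj_xi_Gi (hinj : Function.Injective x) {v : V} {i : Fin (k+1)} (hv : v ∈ Gi G x i) : ¬ G.Adj (x i) v := by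
  intro hadj
  rw [mem_Gi hinj] at hv
  exact hv.2 (conn_single hadj.symm hv.1 (xi_notin_Ai hinj i))

lemma cl_sub_Gi (hinj : Function.Injective x) {v : V} {i : Fin (k+1)} (hv : v ∈ Gi G x i) : clA G x v ⊆ Gi G x i := by
  intro w hw
  rw [mem_Gi hinj] at hv ⊢
  have hvr : v ∉ Set.range x := Gi_not_range hinj (by rw [mem_Gi hinj]; exact hv)
  have hwr : w ∉ Set.range x := conn_mem hw hvr
  constructor
  · intro hmem; exact hwr (by rcases hmem with ⟨l, _, rfl⟩; exact ⟨l, rfl⟩)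
  · intro hc
    exact hv.2 (conn_trans (conn_mono (Ai_compl_mono i) (show Conn G (Set.range x)ᶜ v w from hw)) hc)

lemma mem_clA_self (v : V) : v ∈ clA G x v := conn_refl v

lemma clA_symm {v w : V} (h : w ∈ clA G x v) : v ∈ clA G x w := conn_symm h

lemma clA_sub {v w : V} (h : w ∈ clA G x v) : clA G x w ⊆ clA G x v :=
  fun z hz => conn_trans h hz

lemma clA_not_range {v w : V} (hv : v ∉ Set.range x) (h : w ∈ clA G x v) :
    w ∉ Set.range x := conn_mem h hv

/-- closure under adjacency: neighbors of the closure that stay outside `range x`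
are in the closure -/
lemma clA_adj_closed {v w z : V} (hv : v ∉ Set.range x) (hw : w ∈ clA G x v)
    (hadj : G.Adj w z) (hz : z ∉ Set.range x) : z ∈ clA G x v :=
  conn_trans hw (conn_single hadj (conn_mem hw hv) hz)

lemma nbhd_clA_sub_range {v : V} (hv : v ∉ Set.range x) :
    nbhd G (clA G x v) ⊆ Set.range x := by
  rintro z ⟨hz, w, hw, hadj⟩
  by_contra hzr
  exact hz (clA_adj_closed hv hw hadj hzr)

end basic
variable {k : ℕ} {V : Type} [Fintype V] {G : SimpleGraph V} {x : Fin (k+1) → V}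

lemma cut_of_indep (hcut : ∀ S : Finset V, IsIndep G ↑S → S.card = k → IsVertexCut G ↑S)
    (P : Set V) (hind : IsIndep G P) (hcard : P.ncard = k) :
    ∃ a, a ∈ Pᶜ ∧ ∃ b, b ∈ Pᶜ ∧ ¬ Conn G Pᶜ a b := by
  classical
  have h1 : IsIndep G ↑P.toFinset := by rw [Set.coe_toFinset]; exact hind
  have h2 : P.toFinset.card = k := by rw [← Set.ncard_eq_toFinset_card']; exact hcard
  have h3 := hcut P.toFinset h1 h2
  rw [IsVertexCut, Set.coe_toFinset] at h3
  rw [SimpleGraph.Preconnected] at h3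
  push_neg at h3
  obtain ⟨u, v, huv⟩ := h3
  refine ⟨u, u.2, v, v.2, fun hc => huv ?_⟩
  have := (reachable_iff_conn u.2 v.2).mpr hc
  convert this <;> simp

lemma Ai_indep (hA : IsIndep G (Set.range x)) (i : Fin (k+1)) : IsIndep G (Ai x i) :=
  hA.mono (by rintro v ⟨l, _, rfl⟩; exact ⟨l, rfl⟩)

lemma indep_pair (hinj : Function.Injective x) (hA : IsIndep G (Set.range x))
    {m l : Fin (k+1)} (h : m ≠ l) : ¬ G.Adj (x m) (x l) :=
  hA ⟨m, rfl⟩ ⟨l, rfl⟩ (fun he => h (hinj he))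

lemma Gi_nonempty (hcut : ∀ S : Finset V, IsIndep G ↑S → S.card = k → IsVertexCut G ↑S)
    (hinj : Function.Injective x) (hA : IsIndep G (Set.range x)) (i : Fin (k+1)) :
    (Gi G x i).Nonempty := by
  obtain ⟨a, ha, b, hb, hab⟩ := cut_of_indep hcut (Ai x i) (Ai_indep hA i) (ncard_Ai hinj i)
  by_cases hca : Conn G (Ai x i)ᶜ a (x i)
  · refine ⟨b, (mem_Gi hinj).mpr ⟨hb, fun hcb => ?_⟩⟩
    exact hab (conn_trans hca (conn_symm hcb))
  · exact ⟨a, (mem_Gi hinj).mpr ⟨ha, hca⟩⟩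

lemma nbhd_clA_eq (hconn : KConnected G k) (hinj : Function.Injective x)
    {v : V} {i : Fin (k+1)} (hv : v ∈ Gi G x i) :
    nbhd G (clA G x v) = Ai x i := by
  have hvr : v ∉ Set.range x := Gi_not_range hinj hv
  have hsub : nbhd G (clA G x v) ⊆ Ai x i := by
    rintro z ⟨hz, w, hw, hadj⟩
    have hzr : z ∈ Set.range x := by
      by_contra hzr; exact hz (clA_adj_closed hvr hw hadj hzr)
    rw [Ai_eq_diff hinj]
    refine ⟨hzr, ?_⟩
    simp only [Set.mem_singleton_iff]
    rintro rfl
    exact no_adj_xi_Gi hinj (cl_sub_Gi hinj hv hw) hadj.symm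
  have hxicl : x i ∉ clA G x v := fun h => Gi_not_range hinj (cl_sub_Gi hinj hv h) ⟨i, rfl⟩
  have hxin : x i ∉ nbhd G (clA G x v) := fun h => (xi_notin_Ai hinj i) (hsub h)
  have hge : k ≤ (nbhd G (clA G x v)).ncard := frag hconn (mem_clA_self v) hxicl hxin
  exact Set.eq_of_subset_of_ncard_le hsub (by rw [ncard_Ai hinj i]; exact hge)
    (Set.toFinite _)

lemma Gi_disjoint (hconn : KConnected G k) (hinj : Function.Injective x)
    {i j : Fin (k+1)} (hij : i ≠ j) {v : V} (hvi : v ∈ Gi G x i) (hvj : v ∈ Gi G x j) :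
    False := by
  have h1 := nbhd_clA_eq hconn hinj hvi
  have h2 := nbhd_clA_eq hconn hinj hvj
  have : x i ∈ Ai x i := by
    rw [← h1, h2]; exact (mem_Ai hinj).mpr hij
  exact xi_notin_Ai hinj i this

lemma no_adj_between (hconn : KConnected G k) (hinj : Function.Injective x)
    {i j : Fin (k+1)} (hij : i ≠ j) {v w : V} (hvi : v ∈ Gi G x i) (hwj : w ∈ Gi G x j)
    (hadj : G.Adj v w) : False := by
  have hwr : w ∉ Set.range x := Gi_not_range hinj hwj
  by_cases hw : w ∈ clA G x v
  · exact Gi_disjoint hconn hinj hij (cl_sub_Gi hinj hvi hw) hwj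
  · have : w ∈ nbhd G (clA G x v) := ⟨hw, v, mem_clA_self v, hadj⟩
    rw [nbhd_clA_eq hconn hinj hvi] at this
    exact hwr (by rcases this with ⟨l, _, rfl⟩; exact ⟨l, rfl⟩)

lemma clA_disjoint_Gi {y : V} (hinj : Function.Injective x) (hy : ∀ l, y ∉ Gi G x l)
    {l : Fin (k+1)} {w : V} (hw : w ∈ clA G x y) (hwl : w ∈ Gi G x l) : False :=
  hy l (cl_sub_Gi hinj hwl (clA_symm hw))
variable {k : ℕ} {V : Type} [Fintype V] {G : SimpleGraph V} {x : Fin (k+1) → V}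

lemma exists_third (hk : 3 ≤ k) (i l : Fin (k+1)) : ∃ m, m ≠ i ∧ m ≠ l := by
  by_contra h
  push_neg at h
  have hsub : (Finset.univ : Finset (Fin (k+1))) ⊆ {i, l} := by
    intro m _
    rcases em (m = i) with rfl | hm
    · simp
    · simp [h m hm]
  have := Finset.card_le_card hsub
  rw [Finset.card_univ, Fintype.card_fin] at this
  have h2 : ({i, l} : Finset (Fin (k+1))).card ≤ 2 :=
    (Finset.card_insert_le _ _).trans (by simp)
  omega

lemma outside_nbhd (hconn : KConnected G k) (hinj : Function.Injective x) (hk : 3 ≤ k)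
    (hne : ∀ l, (Gi G x l).Nonempty) {y : V} (hyr : y ∉ Set.range x)
    (hy : ∀ l, y ∉ Gi G x l) (i : Fin (k+1)) :
    ∃ m, m ≠ i ∧ x m ∈ nbhd G (clA G x y) := by
  have hsub : nbhd G (clA G x y) ⊆ Set.range x := nbhd_clA_sub_range hyr
  obtain ⟨b0, hb0⟩ := hne i
  have hb0cl : b0 ∉ clA G x y := fun h => clA_disjoint_Gi hinj hy h hb0
  have hb0n : b0 ∉ nbhd G (clA G x y) := fun h => Gi_not_range hinj hb0 (hsub h)
  have hge : k ≤ (nbhd G (clA G x y)).ncard := frag hconn (mem_clA_self y) hb0cl hb0n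
  have h2 : 1 < (nbhd G (clA G x y)).ncard := by omega
  rw [Set.one_lt_ncard (Set.toFinite _)] at h2
  obtain ⟨a, ha, b, hb, hab⟩ := h2
  obtain ⟨ma, rfl⟩ := hsub ha
  obtain ⟨mb, rfl⟩ := hsub hb
  rcases em (ma = i) with rfl | hma
  · exact ⟨mb, fun h => hab (by rw [h]), hb⟩
  · exact ⟨ma, hma, ha⟩

lemma Fcl_nbhd (hconn : KConnected G k) (hinj : Function.Injective x) (hk : 3 ≤ k)
    {j : Fin (k+1)} {z s : V} (hz : z ∈ Gi G x j) (hs : s ∈ Gi G x j) (hzs : z ≠ s)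
    (i : Fin (k+1)) :
    ∃ m, m ≠ i ∧ m ≠ j ∧
      x m ∈ nbhd G {w | Conn G ((Set.range x)ᶜ ∩ {s}ᶜ) z w} := by
  set T : Set V := (Set.range x)ᶜ ∩ {s}ᶜ with hT
  set F : Set V := {w | Conn G T z w} with hF
  have hzT : z ∈ T := ⟨Gi_not_range hinj hz, hzs⟩
  have hFT : F ⊆ T := fun w hw => conn_mem hw hzT
  have hFcl : F ⊆ clA G x z := fun w hw => conn_mono Set.inter_subset_left hw
  have hFGi : F ⊆ Gi G x j := fun w hw => cl_sub_Gi hinj hz (hFcl hw)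
  have hnsub : nbhd G F ⊆ Ai x j ∪ {s} := by
    rintro w' ⟨hw', w, hw, hadj⟩
    have hw'T : w' ∉ T := by
      intro hmem
      exact hw' (conn_trans hw (conn_single hadj (hFT hw) hmem))
    rcases em (w' = s) with rfl | hws
    · exact Or.inr rfl
    · have hw'r : w' ∈ Set.range x := by
        by_contra hr; exact hw'T ⟨hr, hws⟩
      obtain ⟨m, rfl⟩ := hw'r
      refine Or.inl ((mem_Ai hinj).mpr fun hmj => ?_)
      subst hmj
      exact no_adj_xi_Gi hinj (hFGi hw) hadj.symm
  have hxjF : x j ∉ F := fun h => xi_notin_Gi hinj j (hFGi h)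
  have hxjn : x j ∉ nbhd G F := by
    intro h
    rcases hnsub h with h1 | h1
    · exact xi_notin_Ai hinj j h1
    · exact Gi_not_range hinj hs ⟨j, h1.symm ▸ rfl⟩
  have hge : k ≤ (nbhd G F).ncard := frag hconn (conn_refl z) hxjF hxjn
  by_contra hcon
  push_neg at hcon
  have hsub2 : nbhd G F ⊆ {s, x i} := by
    intro w' hw'
    rcases hnsub hw' with h1 | h1
    · obtain ⟨m, hm, rfl⟩ := h1
      rcases em (m = i) with rfl | hmi
      · exact Or.inr rfl
      · exact absurd hw' (hcon m hmi hm)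
    · exact Or.inl h1
  have : (nbhd G F).ncard ≤ 2 := by
    refine (Set.ncard_le_ncard hsub2 (Set.toFinite _)).trans ?_
    exact (Set.ncard_insert_le _ _).trans (by simp)
  omega
variable {k : ℕ} {V : Type} [Fintype V] {G : SimpleGraph V} {x : Fin (k+1) → V}

lemma conn_in_compl {T P : Set V} {y w : V} (h : Conn G T y w)
    (hd : ∀ z, Conn G T y z → z ∉ P) : Conn G Pᶜ y w :=
  conn_mono (fun z hz => hd z hz) (conn_cl h)

lemma main_eq (hk : 3 ≤ k) (hconn : KConnected G k)
    (hcut : ∀ S : Finset V, IsIndep G ↑S → S.card = k → IsVertexCut G ↑S)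
    (hinj : Function.Injective x) (hA : IsIndep G (Set.range x))
    {i j : Fin (k+1)} (hij : j ≠ i) {a : V} (ha : a ∈ Gi G x j) :
    ∃ S : Finset V, nbhd G {x i} = ↑S ∧ a ∈ S ∧
      (∀ v ∈ S, v ∈ Gi G x j → v = a) := by
  classical
  have hne : ∀ l, (Gi G x l).Nonempty := Gi_nonempty hcut hinj hA
  set u : Fin (k+1) → V := fun l => if l = j then a else (hne l).some with hu_def
  have hu : ∀ l, u l ∈ Gi G x l := by
    intro l
    rw [hu_def]
    rcases em (l = j) with rfl | hl
    · simpa using ha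
    · simpa [hl] using (hne l).some_mem
  set S : Finset V := (Finset.univ.erase i).image u with hS_def
  have hmemS : ∀ {v : V}, v ∈ S ↔ ∃ l, l ≠ i ∧ u l = v := by
    intro v
    simp [hS_def, Finset.mem_image, Finset.mem_erase]
  have hScap : ∀ {v : V} {l : Fin (k+1)}, v ∈ S → v ∈ Gi G x l → l ≠ i ∧ v = u l := by
    intro v l hv hvl
    obtain ⟨m, hm, rfl⟩ := hmemS.mp hv
    rcases em (m = l) with rfl | hml
    · exact ⟨hm, rfl⟩
    · exact absurd (hu m) (fun h => Gi_disjoint hconn hinj hml h hvl)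
  have hSA : ∀ m, x m ∉ S := by
    intro m hm
    obtain ⟨l, _, hl⟩ := hmemS.mp hm
    exact Gi_not_range hinj (hl ▸ hu l) ⟨m, rfl⟩
  have haS : a ∈ S := hmemS.mpr ⟨j, hij, if_pos rfl⟩
  have hSj : ∀ v ∈ S, v ∈ Gi G x j → v = a := by
    intro v hv hvj
    have := (hScap hv hvj).2
    rwa [show u j = a from if_pos rfl] at this
  have hcard : S.card = k := by
    have hinjOn : Set.InjOn u ↑(Finset.univ.erase i) := by
      intro l _ m _ hlm
      by_contra hne'
      exact Gi_disjoint hconn hinj hne' (hu l) (hlm ▸ hu m)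
    rw [hS_def, Finset.card_image_of_injOn hinjOn,
      Finset.card_erase_of_mem (Finset.mem_univ i), Finset.card_univ, Fintype.card_fin]
    omega
  have hindep : IsIndep G ↑S := by
    intro v hv w hw hvw
    obtain ⟨l, _, rfl⟩ := hmemS.mp hv
    obtain ⟨m, _, rfl⟩ := hmemS.mp hw
    have hlm : l ≠ m := fun h => hvw (by rw [h])
    exact fun hadj => no_adj_between hconn hinj hlm (hu l) (hu m) hadj
  -- extract a broken pair from the cut
  obtain ⟨a0, ha0, b0, hb0, hab0⟩ := cut_of_indep hcut ↑S hindep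
    (by rw [Set.ncard_coe_finset]; exact hcard)
  -- star lemma
  have star : ∀ y, y ∉ S → ∃ m, Conn G (↑S : Set V)ᶜ y (x m) ∧
      (y ∉ Set.range x → m ≠ i) := by
    intro y hyS
    rcases em (y ∈ Set.range x) with ⟨m, rfl⟩ | hyr
    · exact ⟨m, conn_refl _, fun h => absurd ⟨m, rfl⟩ h⟩
    rcases em (∃ l, y ∈ Gi G x l) with ⟨l, hyl⟩ | hyG
    · rcases em (∃ s, s ∈ S ∧ s ∈ clA G x y) with ⟨s, hsS, hscl⟩ | hnos
      · -- removed vertex is in the closure: use Fcl_nbhd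
        have hsl : s ∈ Gi G x l := cl_sub_Gi hinj hyl hscl
        have hys : y ≠ s := fun h => hyS (h ▸ hsS)
        obtain ⟨m, hmi, hml, hmn⟩ := Fcl_nbhd hconn hinj hk hyl hsl hys i
        obtain ⟨hxm, w, hw, hadj⟩ := hmn
        have hyT : y ∈ (Set.range x)ᶜ ∩ {s}ᶜ := ⟨hyr, hys⟩
        have hwS : ∀ z, Conn G ((Set.range x)ᶜ ∩ {s}ᶜ) y z → z ∉ (↑S : Set V) := by
          intro z hz hzS
          have hzGi : z ∈ Gi G x l :=
            cl_sub_Gi hinj hyl (conn_mono Set.inter_subset_left hz)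
          have := (hScap (by exact hzS) hzGi).2
          have hzs : z ≠ s := (conn_mem hz hyT).2
          have hsGi := (hScap hsS hsl).2
          exact hzs (this.trans hsGi.symm)
        refine ⟨m, ?_, fun _ => hmi⟩
        have h1 : Conn G (↑S : Set V)ᶜ y w := conn_in_compl hw hwS
        exact h1.tail ⟨hadj, hwS w hw, fun h => hSA m h⟩
      · -- closure avoids S
        push_neg at hnos
        have hd : ∀ z, Conn G (Set.range x)ᶜ y z → z ∉ (↑S : Set V) := by
          intro z hz hzS
          exact hnos z hzS hz
        obtain ⟨m, hmi, hml⟩ := exists_third hk i l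
        have hxm : x m ∈ nbhd G (clA G x y) := by
          rw [nbhd_clA_eq hconn hinj hyl]
          exact (mem_Ai hinj).mpr hml
        obtain ⟨_, w, hw, hadj⟩ := hxm
        refine ⟨m, ?_, fun _ => hmi⟩
        exact (conn_in_compl hw hd).tail ⟨hadj, hd w hw, fun h => hSA m h⟩
    · -- y outside all Gi
      push_neg at hyG
      obtain ⟨m, hmi, hmn⟩ := outside_nbhd hconn hinj hk hne hyr hyG i
      obtain ⟨_, w, hw, hadj⟩ := hmn
      have hd : ∀ z, Conn G (Set.range x)ᶜ y z → z ∉ (↑S : Set V) := by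
        intro z hz hzS
        obtain ⟨l, _, rfl⟩ := hmemS.mp hzS
        exact clA_disjoint_Gi hinj hyG hz (hu l)
      refine ⟨m, ?_, fun _ => hmi⟩
      exact (conn_in_compl hw hd).tail ⟨hadj, hd w hw, fun h => hSA m h⟩
  obtain ⟨ma, hma, _⟩ := star a0 ha0
  obtain ⟨mb, hmb, _⟩ := star b0 hb0
  have hnab : ¬ Conn G (↑S : Set V)ᶜ (x ma) (x mb) := by
    intro h
    exact hab0 ((hma.trans h).trans (conn_symm hmb))
  have hmamb : ma ≠ mb := by rintro rfl; exact hnab (conn_refl _)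
  -- the hub in Gi i
  obtain ⟨w0, hw0⟩ := hne i
  have hcl0S : ∀ z, Conn G (Set.range x)ᶜ w0 z → z ∉ (↑S : Set V) := by
    intro z hz hzS
    exact (hScap (by exact hzS) (cl_sub_Gi hinj hw0 hz)).1 rfl
  have conn_between : ∀ m m', m ≠ i → m' ≠ i → Conn G (↑S : Set V)ᶜ (x m) (x m') := by
    intro m m' hm hm'
    have h1 : x m ∈ nbhd G (clA G x w0) := by
      rw [nbhd_clA_eq hconn hinj hw0]; exact (mem_Ai hinj).mpr hm
    have h2 : x m' ∈ nbhd G (clA G x w0) := by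
      rw [nbhd_clA_eq hconn hinj hw0]; exact (mem_Ai hinj).mpr hm'
    obtain ⟨_, w1, hw1, hadj1⟩ := h1
    obtain ⟨_, w2, hw2, hadj2⟩ := h2
    have h12 : Conn G (Set.range x)ᶜ w1 w2 := (conn_symm hw1).trans hw2
    have hd : ∀ z, Conn G (Set.range x)ᶜ w1 z → z ∉ (↑S : Set V) := by
      intro z hz; exact hcl0S z (hw1.trans hz)
    have hmid : Conn G (↑S : Set V)ᶜ w1 w2 := conn_in_compl h12 hd
    have e1 : Conn G (↑S : Set V)ᶜ (x m) w1 :=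
      conn_single hadj1.symm (fun h => hSA m h) (hcl0S w1 hw1)
    have e2 : Conn G (↑S : Set V)ᶜ w2 (x m') :=
      conn_single hadj2 (hcl0S w2 hw2) (fun h => hSA m' h)
    exact (e1.trans hmid).trans e2
  -- i is one of ma, mb
  have hpex : ∃ p, p ≠ i ∧ ¬ Conn G (↑S : Set V)ᶜ (x i) (x p) := by
    rcases em (ma = i) with rfl | hmai
    · exact ⟨mb, fun h => hmamb h.symm, hnab⟩
    · rcases em (mb = i) with rfl | hmbi
      · exact ⟨ma, hmai, fun h => hnab (conn_symm h)⟩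
      · exact absurd (conn_between ma mb hmai hmbi) hnab
  obtain ⟨p, hpi, hnp⟩ := hpex
  have hall : ∀ m, m ≠ i → ¬ Conn G (↑S : Set V)ᶜ (x i) (x m) := by
    intro m hm hcon
    rcases em (m = p) with rfl | hmp
    · exact hnp hcon
    · exact hnp (hcon.trans (conn_between m p hm hpi))
  have key : ∀ z, G.Adj (x i) z → z ∈ S := by
    intro z hadj
    by_contra hzS
    have hzr : z ∉ Set.range x := by
      rintro ⟨m, rfl⟩
      have hmi : m ≠ i := by rintro rfl; exact hadj.ne rfl
      exact indep_pair hinj hA (fun h => hmi h.symm) hadj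
    have h0 : Conn G (↑S : Set V)ᶜ (x i) z :=
      conn_single hadj (fun h => hSA i h) hzS
    obtain ⟨m, hm, hmi'⟩ := star z hzS
    exact hall m (hmi' hzr) (h0.trans hm)
  -- conclude : nbhd of x i equals S
  have hnsub : nbhd G {x i} ⊆ ↑S := by
    rintro z ⟨_, w, hw, hadj⟩
    rw [Set.mem_singleton_iff] at hw
    exact key z (hw ▸ hadj)
  have hw0n : w0 ∉ nbhd G {x i} := by
    rintro ⟨_, w, hw, hadj⟩
    rw [Set.mem_singleton_iff] at hw
    exact no_adj_xi_Gi hinj hw0 (hw ▸ hadj)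
  have hw0s : w0 ∉ ({x i} : Set V) := by
    intro h
    exact Gi_not_range hinj hw0 ⟨i, (Set.mem_singleton_iff.mp h).symm⟩
  have hge : k ≤ (nbhd G {x i}).ncard := frag hconn rfl hw0s hw0n
  have heq : nbhd G {x i} = ↑S := by
    refine Set.eq_of_subset_of_ncard_le hnsub ?_ (Set.toFinite _)
    rw [Set.ncard_coe_finset, hcard]; exact hge
  exact ⟨S, heq, haS, hSj⟩
variable {k : ℕ} {V : Type} [Fintype V] {G : SimpleGraph V} {x : Fin (k+1) → V}

lemma adj_all (hk : 3 ≤ k) (hconn : KConnected G k)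
    (hcut : ∀ S : Finset V, IsIndep G ↑S → S.card = k → IsVertexCut G ↑S)
    (hinj : Function.Injective x) (hA : IsIndep G (Set.range x))
    {i j : Fin (k+1)} (hij : j ≠ i) {b : V} (hb : b ∈ Gi G x j) : G.Adj (x i) b := by
  obtain ⟨S, heq, hbS, _⟩ := main_eq hk hconn hcut hinj hA hij hb
  have hmem : b ∈ nbhd G {x i} := by rw [heq]; exact hbS
  obtain ⟨_, w, hw, hadj⟩ := hmem
  rw [Set.mem_singleton_iff] at hw
  exact hw ▸ hadj

lemma Gi_subsingleton (hk : 3 ≤ k) (hconn : KConnected G k)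
    (hcut : ∀ S : Finset V, IsIndep G ↑S → S.card = k → IsVertexCut G ↑S)
    (hinj : Function.Injective x) (hA : IsIndep G (Set.range x))
    {i j : Fin (k+1)} (hij : j ≠ i) {a b : V} (ha : a ∈ Gi G x j)
    (hb : b ∈ Gi G x j) : b = a := by
  obtain ⟨S, heq, haS, hSj⟩ := main_eq hk hconn hcut hinj hA hij ha
  have hadj : G.Adj (x i) b := adj_all hk hconn hcut hinj hA hij hb
  have hbn : b ∈ nbhd G {x i} := by
    refine ⟨?_, x i, rfl, hadj⟩
    intro h
    exact Gi_not_range hinj hb ⟨i, (Set.mem_singleton_iff.mp h).symm⟩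
  rw [heq] at hbn
  exact hSj b hbn hb

end Stmt4Aux

theorem stmt4 (k : ℕ) (hk : 3 ≤ k) (V : Type) [Fintype V] (G : SimpleGraph V)
    (hconn : KConnected G k)
    (hcut : ∀ S : Finset V, IsIndep G ↑S → S.card = k → IsVertexCut G ↑S)
    (x : Fin (k + 1) → V) (hinj : Function.Injective x)
    (hA : IsIndep G (Set.range x)) :
    ∀ i : Fin (k + 1), (outsideComponent G (x '' {l | l ≠ i}) (x i)).ncard = 1 := by
  intro i
  have hi' : ∃ i' : Fin (k+1), i' ≠ i := by
    rcases em (i = ⟨0, by omega⟩) with rfl | h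
    · exact ⟨⟨1, by omega⟩, by intro h; exact absurd (congrArg Fin.val h) (by simp)⟩
    · exact ⟨⟨0, by omega⟩, fun hh => h hh.symm⟩
  obtain ⟨i', hi'⟩ := hi'
  show (Stmt4Aux.Gi G x i).ncard = 1
  rw [Set.ncard_eq_one]
  obtain ⟨a, ha⟩ := Stmt4Aux.Gi_nonempty hcut hinj hA i
  refine ⟨a, Set.eq_singleton_iff_unique_mem.mpr ⟨ha, fun b hb => ?_⟩⟩
  exact Stmt4Aux.Gi_subsingleton hk hconn hcut hinj hA hi'.symm ha hb
end

section
/- Let k ≥ 3 be an integer. If a graph G is k-edge-connected with matching number greater than k, then G contains a matching M of cardinality k such that G - M (deleting the edges of M) is connected. -/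
open SimpleGraph

/-- `G` is `k`-edge-connected: deleting fewer than `k` edges leaves a connected graph. -/
def KEdgeConnected {V : Type*} (G : SimpleGraph V) (k : ℕ) : Prop :=
  ∀ F : Finset (Sym2 V), F.card < k → (G.deleteEdges ↑F).Connected

lemma cut_structure {V : Type} [Fintype V] {G : SimpleGraph V} {k : ℕ} (hk : 0 < k)
    (hconn : KEdgeConnected G k) (F : Finset (Sym2 V)) (hcard : F.card ≤ k)
    (hdis : ¬(G.deleteEdges ↑F).Connected) :
    ∃ A : Set V, ∀ a b, G.Adj a b → (s(a,b) ∈ F ↔ (a ∈ A ↔ b ∉ A)) := by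
  classical
  have hV : Nonempty V := (hconn ∅ (by simpa using hk)).nonempty
  obtain ⟨v⟩ := hV
  set A : Set V := {w | (G.deleteEdges ↑F).Reachable v w} with hAdef
  have c1 : ∀ a b, G.Adj a b → s(a,b) ∉ F → (a ∈ A ↔ b ∈ A) := by
    intro a b hab hnF
    have hadj : (G.deleteEdges ↑F).Adj a b := by
      rw [SimpleGraph.deleteEdges_adj]; exact ⟨hab, by simpa using hnF⟩
    constructor
    · intro ha; exact ha.trans hadj.reachable
    · intro hb; exact hb.trans hadj.symm.reachable
  refine ⟨A, ?_⟩
  intro a b hab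
  constructor
  · intro hmem
    by_contra hcr
    have hiff : a ∈ A ↔ b ∈ A := by tauto
    have hcard' : (F.erase s(a,b)).card < k :=
      lt_of_lt_of_le (Finset.card_erase_lt_of_mem hmem) hcard
    have hc := hconn (F.erase s(a,b)) hcard'
    have step : ∀ u c, (G.deleteEdges ↑(F.erase s(a,b))).Adj u c → u ∈ A → c ∈ A := by
      intro u c huc hu
      rw [SimpleGraph.deleteEdges_adj] at huc
      obtain ⟨huc1, huc2⟩ := huc
      by_cases h : s(u,c) ∈ F
      · have heq : s(u,c) = s(a,b) := by
          by_contra hne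
          exact huc2 (by simp [Finset.mem_erase, hne, h])
        rw [Sym2.eq_iff] at heq
        rcases heq with ⟨rfl, rfl⟩ | ⟨rfl, rfl⟩
        · exact hiff.mp hu
        · exact hiff.mpr hu
      · exact (c1 u c huc1 h).mp hu
    have hall : ∀ w, w ∈ A := by
      intro w
      obtain ⟨p⟩ := hc.preconnected v w
      have key : ∀ u₁ w₁, (G.deleteEdges ↑(F.erase s(a,b))).Walk u₁ w₁ → u₁ ∈ A → w₁ ∈ A := by
        intro u₁ w₁ q
        induction q with
        | nil => exact id
        | cons h q ih => exact fun hu => ih (step _ _ h hu)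
      exact key v w p (SimpleGraph.Reachable.refl v)
    have : Nonempty V := ⟨v⟩
    exact hdis ⟨fun u w => ((hall u).symm.trans (hall w))⟩
  · intro hcr
    by_contra hnF
    have := c1 a b hab hnF
    tauto

/-- `M` is a matching of `G`: a set of pairwise disjoint edges. -/
def IsMatchingFinset {V : Type*} (G : SimpleGraph V) (M : Finset (Sym2 V)) : Prop :=
  (↑M : Set (Sym2 V)) ⊆ G.edgeSet ∧
    (↑M : Set (Sym2 V)).Pairwise fun e f => ∀ v, v ∈ e → v ∉ f

lemma matching_subset {V : Type*} {G : SimpleGraph V} {M N : Finset (Sym2 V)}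
    (h : IsMatchingFinset G M) (hsub : N ⊆ M) : IsMatchingFinset G N := by
  obtain ⟨h1, h2⟩ := h
  have hs : (↑N : Set (Sym2 V)) ⊆ (↑M : Set (Sym2 V)) := by exact_mod_cast hsub
  exact ⟨hs.trans h1, h2.mono hs⟩

theorem stmt7 (k : ℕ) (hk : 3 ≤ k) (V : Type) [Fintype V] (G : SimpleGraph V)
    (hconn : KEdgeConnected G k)
    (hmatch : ∃ M : Finset (Sym2 V), IsMatchingFinset G M ∧ k < M.card) :
    ∃ M : Finset (Sym2 V), IsMatchingFinset G M ∧ M.card = k ∧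
      (G.deleteEdges ↑M).Connected := by
  classical
  have hk0 : 0 < k := by omega
  have hV : Nonempty V := (hconn ∅ (by simpa using hk0)).nonempty
  obtain ⟨M0, hM0, hcard0⟩ := hmatch
  obtain ⟨M, hMsub, hMcard⟩ : ∃ M ⊆ M0, M.card = k + 1 :=
    Finset.exists_subset_card_eq (by omega)
  have hM : IsMatchingFinset G M := matching_subset hM0 hMsub
  by_contra hno
  push_neg at hno
  -- each erase fails to keep connectivity
  have hfail : ∀ e ∈ M, ¬(G.deleteEdges ↑(M.erase e)).Connected := by
    intro e he
    apply hno (M.erase e) (matching_subset hM (Finset.erase_subset _ _))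
    rw [Finset.card_erase_of_mem he, hMcard]
    omega
  -- cut structure for each e
  have hAex : ∀ e : Sym2 V, ∃ A : Set V, e ∈ M →
      ∀ a b, G.Adj a b → (s(a,b) ∈ M.erase e ↔ (a ∈ A ↔ b ∉ A)) := by
    intro e
    by_cases he : e ∈ M
    · obtain ⟨A, hA⟩ := cut_structure hk0 hconn (M.erase e)
        (by rw [Finset.card_erase_of_mem he, hMcard]; omega) (hfail e he)
      exact ⟨A, fun _ => hA⟩
    · exact ⟨∅, fun h => absurd h he⟩
  choose A hA using hAex
  -- endpoints
  have hxy : ∀ e : Sym2 V, ∃ p : V × V, e ∈ M → e = s(p.1, p.2) ∧ G.Adj p.1 p.2 := by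
    intro e
    by_cases he : e ∈ M
    · have hedge : e ∈ G.edgeSet := hM.1 (by exact_mod_cast he)
      obtain ⟨a, b⟩ := e
      exact ⟨⟨a, b⟩, fun _ => ⟨rfl, hedge⟩⟩
    · exact ⟨⟨Classical.arbitrary V, Classical.arbitrary V⟩, fun h => absurd h he⟩
  choose p hp using hxy
  set x : Sym2 V → V := fun e => (p e).1 with hxdef
  set y : Sym2 V → V := fun e => (p e).2 with hydef
  set B : Sym2 V → Set V := fun e => if x e ∈ A e then (A e)ᶜ else A e with hBdef
  -- endpoints of e are not in B e
  have hB1 : ∀ e ∈ M, x e ∉ B e ∧ y e ∉ B e := by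
    intro e he
    obtain ⟨heq, hadj⟩ := hp e he
    have hni : s(x e, y e) ∉ M.erase e := by
      rw [← heq]; exact Finset.notMem_erase e M
    have := (hA e he (x e) (y e) hadj).not.mp (by simpa using hni)
    have hxyA : x e ∈ A e ↔ y e ∈ A e := by tauto
    by_cases hx : x e ∈ A e <;> simp only [hBdef, hx, if_pos, if_neg] <;> tauto
  -- crossing characterization with B
  have hB2 : ∀ e ∈ M, ∀ a b, G.Adj a b →
      (s(a,b) ∈ M.erase e ↔ (a ∈ B e ↔ b ∉ B e)) := by
    intro e he a b hab
    rw [hA e he a b hab]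
    by_cases hx : x e ∈ A e <;> simp only [hBdef, hx, if_pos, if_neg] <;>
      simp [Set.mem_compl_iff] <;> tauto
  -- disjointness of the B sides
  have hdisj : ∀ e ∈ M, ∀ f ∈ M, e ≠ f → ∀ w, w ∈ B e → w ∈ B f → False := by
    intro e he f hf hef w hwe hwf
    have hfe : f ∈ M.erase e := Finset.mem_erase.mpr ⟨hef.symm, hf⟩
    set F'' : Finset (Sym2 V) := (M.erase e).erase f with hF''
    have hcF : F''.card < k := by
      rw [hF'', Finset.card_erase_of_mem hfe, Finset.card_erase_of_mem he, hMcard]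
      omega
    have hc := hconn F'' hcF
    have step : ∀ u c, (G.deleteEdges ↑F'').Adj u c →
        u ∈ B e ∩ B f → c ∈ B e ∩ B f := by
      intro u c huc hu
      rw [SimpleGraph.deleteEdges_adj] at huc
      obtain ⟨huc1, huc2⟩ := huc
      have hnF'' : s(u,c) ∉ F'' := by simpa using huc2
      have hce : c ∈ B e := by
        by_cases hcr : s(u,c) ∈ M.erase e
        · -- then s(u,c) = f, but u ∈ B f and endpoints of f are not in B f
          have : s(u,c) = f := by
            by_contra hne
            exact hnF'' (Finset.mem_erase.mpr ⟨hne, hcr⟩)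
          obtain ⟨heqf, hadjf⟩ := hp f hf
          have h2 : s(u,c) = s(x f, y f) := this.trans heqf
          rw [Sym2.eq_iff] at h2
          rcases h2 with ⟨rfl, rfl⟩ | ⟨rfl, rfl⟩
          · exact absurd hu.2 (hB1 f hf).1
          · exact absurd hu.2 (hB1 f hf).2
        · have := (hB2 e he u c huc1).not.mp hcr
          have hu1 := hu.1
          tauto
      have hcf : c ∈ B f := by
        by_cases hcr : s(u,c) ∈ M.erase f
        · have : s(u,c) = e := by
            by_contra hne
            apply hnF''
            rw [hF'']
            refine Finset.mem_erase.mpr ⟨?_, Finset.mem_erase.mpr ⟨hne, ?_⟩⟩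
            · rintro rfl
              exact (Finset.mem_erase.mp hcr).1 rfl
            · exact (Finset.mem_erase.mp hcr).2
          obtain ⟨heqe, hadje⟩ := hp e he
          have h2 : s(u,c) = s(x e, y e) := this.trans heqe
          rw [Sym2.eq_iff] at h2
          rcases h2 with ⟨rfl, rfl⟩ | ⟨rfl, rfl⟩
          · exact absurd hu.1 (hB1 e he).1
          · exact absurd hu.1 (hB1 e he).2
        · have := (hB2 f hf u c huc1).not.mp hcr
          have hu2 := hu.2
          tauto
      exact ⟨hce, hcf⟩
    obtain ⟨p'⟩ := hc.preconnected w (x e)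
    have key : ∀ u₁ w₁, (G.deleteEdges ↑F'').Walk u₁ w₁ →
        u₁ ∈ B e ∩ B f → w₁ ∈ B e ∩ B f := by
      intro u₁ w₁ q
      induction q with
      | nil => exact id
      | cons h q ih => exact fun hu => ih (step _ _ h hu)
    exact (hB1 e he).1 (key w (x e) p' ⟨hwe, hwf⟩).1
  -- every other edge crosses B e
  have hcross : ∀ e ∈ M, ∀ f ∈ M, e ≠ f → x e ∈ B f ∨ y e ∈ B f := by
    intro e he f hf hef
    obtain ⟨heq, hadj⟩ := hp e he
    have hmem : s(x e, y e) ∈ M.erase f := by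
      rw [← heq]; exact Finset.mem_erase.mpr ⟨hef, he⟩
    have := (hB2 f hf (x e) (y e) hadj).mp hmem
    tauto
  -- pick four distinct edges
  have h4 : 4 ≤ M.card := by omega
  obtain ⟨e, he⟩ := Finset.card_pos.mp (by omega : 0 < M.card)
  have h3 : 0 < (M.erase e).card := by rw [Finset.card_erase_of_mem he]; omega
  obtain ⟨f, hf'⟩ := Finset.card_pos.mp h3
  obtain ⟨hfe, hf⟩ := Finset.mem_erase.mp hf'
  have h2 : 0 < ((M.erase e).erase f).card := by
    rw [Finset.card_erase_of_mem hf', Finset.card_erase_of_mem he]; omega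
  obtain ⟨g, hg'⟩ := Finset.card_pos.mp h2
  obtain ⟨hgf, hg''⟩ := Finset.mem_erase.mp hg'
  obtain ⟨hge, hg⟩ := Finset.mem_erase.mp hg''
  have h1 : 0 < (((M.erase e).erase f).erase g).card := by
    rw [Finset.card_erase_of_mem hg', Finset.card_erase_of_mem hf',
      Finset.card_erase_of_mem he]
    omega
  obtain ⟨h, hh'⟩ := Finset.card_pos.mp h1
  obtain ⟨hhg, hh''⟩ := Finset.mem_erase.mp hh'
  obtain ⟨hhf, hh'''⟩ := Finset.mem_erase.mp hh''
  obtain ⟨hhe, hh⟩ := Finset.mem_erase.mp hh'''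
  -- e must cross B f, B g, B h : pigeonhole on two endpoints
  have c1 := hcross e he f hf (Ne.symm hfe)
  have c2 := hcross e he g hg (Ne.symm hge)
  have c3 := hcross e he h hh (Ne.symm hhe)
  rcases c1 with c1 | c1 <;> rcases c2 with c2 | c2 <;> rcases c3 with c3 | c3
  · exact hdisj f hf g hg (Ne.symm hgf) _ c1 c2
  · exact hdisj f hf g hg (Ne.symm hgf) _ c1 c2
  · exact hdisj f hf h hh (Ne.symm hhf) _ c1 c3
  · exact hdisj g hg h hh (Ne.symm hhg) _ c2 c3
  · exact hdisj g hg h hh (Ne.symm hhg) _ c2 c3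
  · exact hdisj f hf h hh (Ne.symm hhf) _ c1 c3
  · exact hdisj f hf g hg (Ne.symm hgf) _ c1 c2
  · exact hdisj f hf g hg (Ne.symm hgf) _ c1 c2
end

section
/- Cycles are the only 2-edge-connected graphs in which any two nonadjacent (vertex-disjoint) edges form a separating edge set: if G is 2-edge-connected with matching number at least 2 and for every pair of disjoint edges {e,f} the graph G - {e,f} is disconnected, then G is a cycle. -/
/-!
Take disjoint edges `e`, `f = xy` of `G`. As `G - e` is connected but `G - e - f` is not, `f` is a
bridge of `G - e`, so `x` and `y` lie in different components of `G - e - f`. A cycle of `G - e`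
avoids the bridge `f`, hence lies in one of these components and has an edge `g` meeting neither
`x` nor `y`. But `g` is not a bridge of the connected graph `G - f`, so `G - {g, f}` is connected,
against the hypothesis. Thus `G - e` is a tree and `G` has exactly `|V|` edges; since every degree
is at least `2`, `G` is `2`-regular, and a Hamiltonian cycle of a connected `2`-regular graph is an
isomorphism with the cycle graph.
-/

open SimpleGraph

open Finset

namespace KEdgeConnected

variable {V : Type*} {G : SimpleGraph V} {k : ℕ}

lemma connected (h : KEdgeConnected G k) (hk : k ≠ 0) : G.Connected := by
  simpa using h ∅ (by simpa [Nat.pos_iff_ne_zero])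

lemma connected_deleteEdges_singleton (h : KEdgeConnected G 2) (e : Sym2 V) :
    (G.deleteEdges {e}).Connected := by
  simpa using h {e} (by simp)

lemma isEdgeConnected (h : KEdgeConnected G k) : G.IsEdgeConnected k := by
  intro u v s hs
  have hfin : s.Finite := Set.encard_lt_top_iff.mp (hs.trans (ENat.natCast_lt_top k))
  rw [hfin.encard_eq_coe_toFinset_card, Nat.cast_lt] at hs
  simpa using (h hfin.toFinset hs).preconnected u v

end KEdgeConnected

namespace SimpleGraph

variable {V : Type*} {G : SimpleGraph V}

lemma Walk.IsCycle.exists_mem_edges_notMem {u : V} {c : G.Walk u u} (hc : c.IsCycle) (y : V) :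
    ∃ g ∈ c.edges, y ∉ g := by
  classical
  by_cases hy : y ∈ c.support
  · have hc' := hc.rotate hy
    obtain ⟨v₁, h₁, q, hq⟩ := Walk.not_nil_iff.mp hc'.not_nil
    obtain ⟨v₂, _, r, rfl⟩ := Walk.not_nil_iff.mp (Walk.not_nil_of_ne (p := q) h₁.ne')
    have hv₂ : v₂ ≠ y := by
      rintro rfl
      have hnd := hc'.edges_nodup
      rw [hq] at hnd
      simp [Sym2.eq_swap] at hnd
    refine ⟨s(v₁, v₂), (c.rotate_edges y hy).mem_iff.mp (by simp [hq]), ?_⟩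
    simp [h₁.ne, hv₂.symm]
  · obtain ⟨v, _, q, hq⟩ := Walk.not_nil_iff.mp hc.not_nil
    have hmem : s(u, v) ∈ c.edges := by simp [hq]
    exact ⟨s(u, v), hmem, fun hyg => hy (Walk.mem_support_of_mem_edges hmem hyg)⟩

lemma Walk.IsCycle.exists_mem_edges_of_not_reachable {u : V} {c : G.Walk u u} (hc : c.IsCycle)
    {x y : V} (hxy : ¬ G.Reachable x y) : ∃ g ∈ c.edges, x ∉ g ∧ y ∉ g := by
  classical
  have hsupp : x ∉ c.support ∨ y ∉ c.support := by
    by_contra! h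
    exact hxy ⟨(c.takeUntil x h.1).reverse.append (c.takeUntil y h.2)⟩
  rcases hsupp with hx | hy
  · obtain ⟨g, hg, hyg⟩ := hc.exists_mem_edges_notMem y
    exact ⟨g, hg, fun hxg => hx (Walk.mem_support_of_mem_edges hg hxg), hyg⟩
  · obtain ⟨g, hg, hxg⟩ := hc.exists_mem_edges_notMem x
    exact ⟨g, hg, hxg, fun hyg => hy (Walk.mem_support_of_mem_edges hg hyg)⟩

lemma deleteEdges_singleton_deleteEdges_singleton (e f : Sym2 V) :
    (G.deleteEdges {e}).deleteEdges {f} = G.deleteEdges {e, f} := by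
  rw [deleteEdges_deleteEdges, Set.singleton_union]

lemma isTree_deleteEdges_of_forall_disjoint_not_preconnected {e f : Sym2 V}
    (he : (G.deleteEdges {e}).Connected) (hf : (G.deleteEdges {f}).Connected)
    (hef : ¬ (G.deleteEdges {e, f}).Preconnected)
    (hsep : ∀ g ∈ G.edgeSet, (∀ v ∈ g, v ∉ f) → ¬ (G.deleteEdges {g, f}).Preconnected) :
    (G.deleteEdges {e}).IsTree := by
  induction f with | h x y =>
  set T := G.deleteEdges {e}
  have hbridge : T.IsBridge s(x, y) := by
    intro hxy
    refine hef ?_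
    rw [← deleteEdges_singleton_deleteEdges_singleton]
    exact (he.connected_delete_edge_of_not_isBridge (not_not.mpr hxy)).preconnected
  refine ⟨he, fun u c hc => ?_⟩
  set G' := T.deleteEdges {s(x, y)}
  have hcG' : ∀ g ∈ c.edges, g ∈ G'.edgeSet := fun g hg => by
    rw [edgeSet_deleteEdges]
    exact ⟨c.edges_subset_edgeSet hg, fun h => hbridge.notMem_edges_of_isCycle hc (h ▸ hg)⟩
  obtain ⟨g, hg, hxg, hyg⟩ := (hc.transfer hcG').exists_mem_edges_of_not_reachable hbridge
  rw [Walk.edges_transfer] at hg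
  induction g with | h a b =>
  have hnotbridge : ¬ (G.deleteEdges {s(x, y)}).IsBridge s(a, b) := fun hb =>
    (hb.anti (deleteEdges_mono (deleteEdges_le _))).notMem_edges_of_isCycle (hc.transfer hcG')
      (by rwa [Walk.edges_transfer])
  refine hsep s(a, b) (deleteEdges_le _ (c.edges_subset_edgeSet hg)) ?_ ?_
  · intro v hv hvf
    rcases Sym2.mem_iff.mp hvf with rfl | rfl
    · exact hxg hv
    · exact hyg hv
  · rw [Set.pair_comm, ← deleteEdges_singleton_deleteEdges_singleton]
    exact (hf.connected_delete_edge_of_not_isBridge hnotbridge).preconnected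

lemma card_edgeFinset_eq_of_isTree_deleteEdges [Fintype V] [DecidableEq V] [DecidableRel G.Adj]
    {e : Sym2 V} (he : e ∈ G.edgeSet) (h : (G.deleteEdges {e}).IsTree) :
    #G.edgeFinset = Fintype.card V := by
  have herase : (G.deleteEdges {e}).edgeFinset = G.edgeFinset.erase e := by
    ext g
    simp [edgeSet_deleteEdges, and_comm]
  have hcard := h.card_edgeFinset
  rw [herase, card_erase_of_mem (mem_edgeFinset.mpr he)] at hcard
  have hpos : 0 < #G.edgeFinset := card_pos.mpr ⟨e, mem_edgeFinset.mpr he⟩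
  omega

lemma degree_eq_two_of_card_edgeFinset_eq [Fintype V] [DecidableRel G.Adj]
    (hmin : ∀ v, 2 ≤ G.degree v) (hcard : #G.edgeFinset = Fintype.card V) (v : V) :
    G.degree v = 2 := by
  have hsum : ∑ v, G.degree v = ∑ _ : V, 2 := by
    rw [sum_degrees_eq_twice_card_edges, hcard, sum_const, card_univ, smul_eq_mul, mul_comm]
  exact (sum_eq_sum_iff_of_le (fun v _ => hmin v)).mp hsum.symm v (mem_univ v) |>.symm

lemma Hom.nonempty_iso_of_bijective_of_degree_le {W : Type*} {H : SimpleGraph W} [Fintype V]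
    [Fintype W] [DecidableRel G.Adj] [DecidableRel H.Adj] (f : H →g G)
    (hf : Function.Bijective f) (hdeg : ∀ a, G.degree (f a) ≤ H.degree a) :
    Nonempty (H ≃g G) := by
  classical
  have hadj : ∀ a b, G.Adj (f a) (f b) → H.Adj a b := by
    intro a b hab
    have himage : (H.neighborFinset a).image f = G.neighborFinset (f a) := by
      refine eq_of_subset_of_card_le (fun _ hx => ?_) ?_
      · obtain ⟨c, hc, rfl⟩ := mem_image.mp hx
        exact (mem_neighborFinset _ _ _).mpr (f.map_adj ((mem_neighborFinset _ _ _).mp hc))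
      · rw [card_image_of_injective _ hf.injective, card_neighborFinset_eq_degree,
          card_neighborFinset_eq_degree]
        exact hdeg a
    obtain ⟨c, hc, hcb⟩ := mem_image.mp (himage ▸ (mem_neighborFinset _ _ _).mpr hab)
    rw [hf.injective hcb] at hc
    exact (mem_neighborFinset _ _ _).mp hc
  exact ⟨⟨Equiv.ofBijective f hf, ⟨hadj _ _, f.map_adj⟩⟩⟩

lemma Connected.exists_isHamiltonianCycle_of_degree_eq_two [Fintype V] [DecidableEq V]
    [DecidableRel G.Adj] (hG : G.Connected) (hdeg : ∀ v, G.degree v = 2) :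
    ∃ (u : V) (p : G.Walk u u), p.IsHamiltonianCycle := by
  have hcyc : G.IsCycles := fun v _ => by
    rw [← Nat.card_coe_set_eq, Nat.card_eq_fintype_card, card_neighborSet_eq_degree, hdeg]
  obtain ⟨u⟩ := hG.nonempty
  obtain ⟨v, huv⟩ := (G.degree_pos_iff_exists_adj u).mp (by rw [hdeg]; norm_num)
  obtain ⟨p, hp, hverts⟩ := hcyc.exists_cycle_toSubgraph_verts_eq_connectedComponentSupp
    (c := G.connectedComponentMk u) rfl ⟨v, huv⟩
  refine ⟨u, p, hp, hp.isPath_tail.isHamiltonian_of_mem fun w => ?_⟩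
  have hw : w ∈ p.support := by
    rw [← Walk.mem_verts_toSubgraph, hverts]
    exact ConnectedComponent.eq.mpr (hG.preconnected w u)
  rw [Walk.support_tail_of_not_nil _ hp.not_nil]
  rcases (Walk.mem_support_iff p).mp hw with rfl | hw
  · exact Walk.end_mem_tail_support hp.not_nil
  · exact hw

lemma cycleGraph_degree_eq_two {n : ℕ} (hn : 3 ≤ n) (v : Fin n) : (cycleGraph n).degree v = 2 := by
  obtain ⟨m, rfl⟩ := Nat.exists_eq_add_of_le' hn
  exact cycleGraph_degree_three_le

lemma Connected.nonempty_iso_cycleGraph_of_degree_eq_two [Fintype V] [DecidableRel G.Adj]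
    (hG : G.Connected) (hdeg : ∀ v, G.degree v = 2) :
    3 ≤ Fintype.card V ∧ Nonempty (G ≃g cycleGraph (Fintype.card V)) := by
  classical
  obtain ⟨u, p, hp⟩ := hG.exists_isHamiltonianCycle_of_degree_eq_two hdeg
  have h3 : 3 ≤ Fintype.card V := hp.length_eq ▸ hp.isCycle.three_le_length
  obtain ⟨φ⟩ := (cycleGraph_isContained_iff h3).mpr ⟨u, p, hp.isCycle, hp.length_eq⟩
  have hbij : Function.Bijective φ :=
    (Fintype.bijective_iff_injective_and_card φ).mpr ⟨φ.injective, by simp⟩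
  obtain ⟨ψ⟩ := Hom.nonempty_iso_of_bijective_of_degree_le φ.toHom hbij
    fun a => by rw [hdeg, cycleGraph_degree_eq_two h3]
  exact ⟨h3, ⟨ψ.symm⟩⟩

end SimpleGraph

theorem stmt10 (V : Type) [Fintype V] (G : SimpleGraph V) (hconn : KEdgeConnected G 2)
    (hmatch : ∃ M : Finset (Sym2 V), IsMatchingFinset G M ∧ 2 ≤ M.card)
    (hsep : ∀ e f : Sym2 V, e ∈ G.edgeSet → f ∈ G.edgeSet → (∀ v, v ∈ e → v ∉ f) →
      ¬ (G.deleteEdges {e, f}).Preconnected) :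
    ∃ n : ℕ, 3 ≤ n ∧ Nonempty (G ≃g cycleGraph n) := by
  classical
  obtain ⟨M, ⟨hMG, hMdisj⟩, hM⟩ := hmatch
  obtain ⟨e, he, f, hf, hef⟩ := Finset.one_lt_card.mp hM
  have htree : (G.deleteEdges {e}).IsTree :=
    isTree_deleteEdges_of_forall_disjoint_not_preconnected
      (hconn.connected_deleteEdges_singleton e) (hconn.connected_deleteEdges_singleton f)
      (hsep e f (hMG he) (hMG hf) (hMdisj he hf hef))
      (fun g hg hgf => hsep g f hg (hMG hf) hgf)
  have : Nontrivial V := by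
    obtain ⟨a, b⟩ := e
    exact (G.mem_edgeSet.mp (hMG he)).nontrivial
  have hdeg : ∀ v, G.degree v = 2 :=
    degree_eq_two_of_card_edgeFinset_eq (fun _ => hconn.isEdgeConnected.le_degree)
      (card_edgeFinset_eq_of_isTree_deleteEdges (hMG he) htree)
  obtain ⟨h3, hiso⟩ := (hconn.connected two_ne_zero).nonempty_iso_cycleGraph_of_degree_eq_two hdeg
  exact ⟨_, h3, hiso⟩
end

section
/- Let G be a 2-connected graph whose periphery has cardinality at least 2. Then G contains two peripheral vertices u, v such that G - {u, v} is connected. -/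
open SimpleGraph

/-- `v` is a peripheral vertex: its eccentricity equals the diameter of `G`. -/
def IsPeripheral {V : Type*} (G : SimpleGraph V) (v : V) : Prop :=
  (⨆ u, G.edist v u) = G.ediam

/-!
Take a diametral pair `u, r`. If some peripheral `p ≠ u` is farthest from `r` among the vertices
other than `u`, then every vertex of `G - {u, p}` is joined to `r` by a geodesic, and such a
geodesic is too short to pass through `u` or `p`. Otherwise no vertex other than `u` is at
distance `diam G` from `r`, so every neighbour of `u`, being at distance `diam G - 1` from `r`,
is farthest from `r` and hence not peripheral. Then in `G - {u, r}` every vertex reaches a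
neighbour of `u` and a neighbour of `r` (as `G - r` and `G - u` are connected), and those
neighbours are joined by a geodesic of length `< diam G`, which cannot pass through `u` or `r`.
-/

namespace SimpleGraph

variable {V : Type*} {G : SimpleGraph V}

lemma Walk.dist_add_dist_le_length {a b v : V} (p : G.Walk a b) (hv : v ∈ p.support) :
    G.dist a v + G.dist v b ≤ p.length := by
  classical
  calc G.dist a v + G.dist v b ≤ (p.takeUntil v hv).length + (p.dropUntil v hv).length :=
        add_le_add (G.dist_le _) (G.dist_le _)
    _ = p.length := by rw [← Walk.length_append, Walk.take_spec]

lemma Connected.reachable_induce_of_lt_dist_add_dist (hG : G.Connected) {s : Set V} {a b : V}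
    (ha : a ∈ s) (hb : b ∈ s) (h : ∀ v ∉ s, G.dist a b < G.dist a v + G.dist v b) :
    (G.induce s).Reachable ⟨a, ha⟩ ⟨b, hb⟩ := by
  obtain ⟨p, hp⟩ := hG.exists_walk_length_eq_dist a b
  have hps : ∀ v ∈ p.support, v ∈ s := fun v hv ↦ by
    by_contra hvs
    have := p.dist_add_dist_le_length hv
    have := h v hvs
    omega
  exact ⟨p.induce s hps⟩

lemma Walk.exists_adj_reachable_induce_diff {s : Set V} {u : V} {x y : s}
    (p : (G.induce s).Walk x y) (hy : y.1 = u) (hx : x.1 ≠ u) :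
    ∃ z, ∃ hz : z ∈ s \ {u}, G.Adj z u ∧
      (G.induce (s \ {u})).Reachable ⟨x, x.2, hx⟩ ⟨z, hz⟩ := by
  induction p with
  | nil => exact absurd hy hx
  | @cons x c y hxc p ih =>
    by_cases hc : c.1 = u
    · exact ⟨x, ⟨x.2, hx⟩, hc ▸ hxc, .rfl⟩
    · obtain ⟨z, hz, hzu, hcz⟩ := ih hy hc
      have hxc' : (G.induce (s \ {u})).Adj ⟨x, x.2, hx⟩ ⟨c, c.2, hc⟩ := hxc
      exact ⟨z, hz, hzu, hxc'.reachable.trans hcz⟩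

lemma exists_adj_reachable_induce_of_preconnected {s t : Set V} {u a : V}
    (hs : (G.induce s).Preconnected) (hu : u ∈ s) (hst : s \ {u} ⊆ t) (ha : a ∈ s \ {u}) :
    ∃ y, ∃ hy : y ∈ t, G.Adj y u ∧ (G.induce t).Reachable ⟨a, hst ha⟩ ⟨y, hy⟩ := by
  obtain ⟨p⟩ := hs ⟨a, ha.1⟩ ⟨u, hu⟩
  obtain ⟨y, hy, hyu, hay⟩ := p.exists_adj_reachable_induce_diff rfl ha.2
  exact ⟨y, hst hy, hyu, hay.map (G.induceHomOfLE hst).toHom⟩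

lemma Connected.connected_induce_compl_pair_of_forall_dist_le (hG : G.Connected)
    {u p r : V} (hru : r ≠ u) (hrp : r ≠ p) (hpu : G.dist r p ≤ G.dist r u)
    (hmax : ∀ x, x ≠ u → G.dist r x ≤ G.dist r p) :
    (G.induce ({u, p} : Set V)ᶜ).Connected := by
  rw [connected_iff_exists_forall_reachable]
  refine ⟨⟨r, by simp [hru, hrp]⟩, ?_⟩
  rintro ⟨x, hx⟩
  have hxu : x ≠ u := fun h ↦ hx (by simp [h])
  have hxp : x ≠ p := fun h ↦ hx (by simp [h])
  refine hG.reachable_induce_of_lt_dist_add_dist _ hx fun v hv ↦ ?_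
  have hvx := hG.pos_dist_of_ne (u := v) (v := x) (by rintro rfl; exact hv hx)
  have := hmax x hxu
  obtain rfl | rfl : v = u ∨ v = p := by simpa using Set.notMem_compl_iff.mp hv
  all_goals omega

lemma Connected.preconnected_induce_compl_pair (hG : G.Connected) {u r : V} (hur : u ≠ r)
    (hu : (G.induce {u}ᶜ).Preconnected) (hr : (G.induce {r}ᶜ).Preconnected)
    (hdist : ∀ y z, G.Adj y u → G.Adj z r → G.dist y z < G.dist u r) :
    (G.induce ({u, r} : Set V)ᶜ).Preconnected := by
  have hsub₁ : ({r}ᶜ \ {u} : Set V) ⊆ {u, r}ᶜ := fun x hx ↦ by simp_all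
  have hsub₂ : ({u}ᶜ \ {r} : Set V) ⊆ {u, r}ᶜ := fun x hx ↦ by simp_all
  rintro ⟨a, ha⟩ ⟨b, hb⟩
  obtain ⟨y, hy, hyu, hay⟩ := exists_adj_reachable_induce_of_preconnected hr
    (Set.mem_compl_singleton_iff.mpr hur) hsub₁ (a := a) (by simp_all)
  obtain ⟨z, hz, hzr, hbz⟩ := exists_adj_reachable_induce_of_preconnected hu
    (Set.mem_compl_singleton_iff.mpr hur.symm) hsub₂ (a := b) (by simp_all)
  have hyz : (G.induce ({u, r} : Set V)ᶜ).Reachable ⟨y, hy⟩ ⟨z, hz⟩ := by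
    refine hG.reachable_induce_of_lt_dist_add_dist hy hz fun v hv ↦ ?_
    have := hdist y z hyu hzr
    have := hG.dist_triangle (u := u) (v := z) (w := r)
    have := hG.dist_triangle (u := u) (v := y) (w := r)
    have := dist_eq_one_iff_adj.mpr hyu
    have := dist_eq_one_iff_adj.mpr hyu.symm
    have := dist_eq_one_iff_adj.mpr hzr
    have := dist_eq_one_iff_adj.mpr hzr.symm
    obtain rfl | rfl : v = u ∨ v = r := by simpa using Set.notMem_compl_iff.mp hv
    all_goals omega
  exact hay.trans (hyz.trans hbz.symm)

variable [Finite V]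

lemma Connected.dist_le_diam (hG : G.Connected) (a b : V) : G.dist a b ≤ G.diam :=
  have := hG.nonempty
  SimpleGraph.dist_le_diam (connected_iff_ediam_ne_top.mp hG)

lemma Connected.isPeripheral_iff_exists_dist_eq_diam (hG : G.Connected) {v : V} :
    IsPeripheral G v ↔ ∃ w, G.dist v w = G.diam := by
  have := hG.nonempty
  have hdiam : (G.diam : ℕ∞) = G.ediam := ENat.natCast_toNat (connected_iff_ediam_ne_top.mp hG)
  have hdist (w : V) : (G.dist v w : ℕ∞) = G.edist v w := (hG v w).coe_dist_eq_edist
  change G.eccent v = G.ediam ↔ _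
  constructor
  · intro h
    obtain ⟨w, hw⟩ := G.exists_edist_eq_eccent_of_finite v
    exact ⟨w, by exact_mod_cast (hdist w).trans (hw.trans (h.trans hdiam.symm))⟩
  · rintro ⟨w, hw⟩
    refine le_antisymm eccent_le_ediam ?_
    calc G.ediam = G.edist v w := by rw [← hdiam, ← hdist, hw]
      _ ≤ G.eccent v := edist_le_eccent

lemma Connected.isPeripheral_of_dist_eq_diam (hG : G.Connected) {v w : V}
    (h : G.dist v w = G.diam) : IsPeripheral G v :=
  hG.isPeripheral_iff_exists_dist_eq_diam.mpr ⟨w, h⟩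

lemma Connected.dist_lt_diam_of_not_isPeripheral (hG : G.Connected) {v : V}
    (hv : ¬ IsPeripheral G v) (w : V) : G.dist v w < G.diam :=
  (hG.dist_le_diam v w).lt_of_ne fun h ↦ hv (hG.isPeripheral_of_dist_eq_diam h)

lemma Connected.not_isPeripheral_of_adj (hG : G.Connected) {u r y : V}
    (hru : G.dist r u = G.diam)
    (hP : ¬ ∃ p, p ≠ u ∧ IsPeripheral G p ∧ ∀ x, x ≠ u → G.dist r x ≤ G.dist r p)
    (hyu : G.Adj y u) : ¬ IsPeripheral G y := by
  refine fun hy ↦ hP ⟨y, hyu.ne, hy, fun x hx ↦ ?_⟩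
  have : G.dist r x ≠ G.diam := fun h ↦
    hP ⟨x, hx, hG.isPeripheral_of_dist_eq_diam (dist_comm.trans h),
      fun x' _ ↦ h ▸ hG.dist_le_diam r x'⟩
  have := hG.dist_le_diam r x
  have := hG.dist_triangle (u := r) (v := y) (w := u)
  have := dist_eq_one_iff_adj.mpr hyu
  omega

end SimpleGraph

section

variable {V : Type*} {G : SimpleGraph V} [Fintype V] {k : ℕ}

lemma exists_ne_and_ne_of_two_lt_card (h : 2 < Fintype.card V) (a b : V) :
    ∃ c, c ≠ a ∧ c ≠ b := by
  classical
  obtain ⟨c, -, hc⟩ := Finset.exists_mem_notMem_of_card_lt_card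
    ((Finset.card_le_two (a := a) (b := b)).trans_lt h)
  exact ⟨c, fun h ↦ hc (by simp [h]), fun h ↦ hc (by simp [h])⟩

lemma KConnected.connected (h : KConnected G k) (hk : k ≠ 0) : G.Connected := by
  have : Nonempty V := Fintype.card_pos_iff.mp (by have := h.1; omega)
  have hpre : (G.induce (↑(∅ : Finset V))ᶜ).Preconnected :=
    of_not_not (h.2 ∅ (Nat.pos_of_ne_zero hk))
  rw [Finset.coe_empty, Set.compl_empty] at hpre
  exact ⟨(induceUnivIso G).preconnected_iff.mp hpre⟩

lemma KConnected.preconnected_induce_compl_singleton (h : KConnected G k) (hk : 2 ≤ k) (v : V) :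
    (G.induce {v}ᶜ).Preconnected := by
  have := of_not_not (h.2 {v} (by rw [Finset.card_singleton]; omega))
  rwa [Finset.coe_singleton] at this

end

theorem stmt11_general (V : Type) [Fintype V] (G : SimpleGraph V) (hconn : KConnected G 2) :
    ∃ u v : V, u ≠ v ∧ IsPeripheral G u ∧ IsPeripheral G v ∧
      (G.induce ({u, v} : Set V)ᶜ).Connected := by
  have hG := hconn.connected two_ne_zero
  have := hG.nonempty
  obtain ⟨u, r, hur⟩ := G.exists_dist_eq_diam
  have hru : G.dist r u = G.diam := dist_comm.trans hur
  obtain ⟨c, hcu, hcr⟩ := exists_ne_and_ne_of_two_lt_card hconn.1 u r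
  have hu := hG.isPeripheral_of_dist_eq_diam hur
  have hr := hG.isPeripheral_of_dist_eq_diam hru
  have hne : u ≠ r := by
    rintro rfl
    have := hG.dist_le_diam u c
    rw [← hur, dist_self] at this
    exact (hG.pos_dist_of_ne hcu.symm).ne' (Nat.le_zero.mp this)
  by_cases hP : ∃ p, p ≠ u ∧ IsPeripheral G p ∧ ∀ x, x ≠ u → G.dist r x ≤ G.dist r p
  · obtain ⟨p, hpu, hp, hmax⟩ := hP
    have hrp : r ≠ p := by
      rintro rfl
      exact (hG.pos_dist_of_ne hcr.symm).ne' (Nat.le_zero.mp (dist_self (G := G) ▸ hmax c hcu))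
    exact ⟨u, p, hpu.symm, hu, hp, hG.connected_induce_compl_pair_of_forall_dist_le hne.symm hrp
      (hru ▸ hG.dist_le_diam r p) hmax⟩
  · have : Nonempty ↥({u, r} : Set V)ᶜ := ⟨c, by simp [hcu, hcr]⟩
    refine ⟨u, r, hne, hu, hr, ⟨hG.preconnected_induce_compl_pair hne
      (hconn.preconnected_induce_compl_singleton le_rfl u)
      (hconn.preconnected_induce_compl_singleton le_rfl r) fun y z hyu _ ↦ ?_⟩⟩
    exact hur ▸ hG.dist_lt_diam_of_not_isPeripheral (hG.not_isPeripheral_of_adj hru hP hyu) z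

theorem stmt11 (V : Type) [Fintype V] (G : SimpleGraph V) (hconn : KConnected G 2)
    (hper : 2 ≤ {v : V | IsPeripheral G v}.ncard) :
    ∃ u v : V, u ≠ v ∧ IsPeripheral G u ∧ IsPeripheral G v ∧
      (G.induce ({u, v} : Set V)ᶜ).Connected :=
  stmt11_general V G hconn
end

section
/- Let G be a 2-connected graph of diameter d ≥ 2, let x, y be vertices with d(x,y) = d, let P be a shortest (x,y)-path, and let H be a component of G - {x,y} not containing P - {x,y}. If x' is a neighbor of x in H and y' is the neighbor of y on P, then d(x', y') = d; in particular x' is a peripheral vertex. -/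
open SimpleGraph

/-!
A shortest walk from `x'` to `y'` has to leave the component `C` of `G - {x, y}`, so it passes
through `x` or through `y`. Since `x'` is adjacent to `x` and `y'` to `y`, going through `x` costs
at least `1 + d(x, y') ≥ d(x, y)`, and going through `y` at least `d(x', y) + 1 ≥ d(x, y)`.
Hence `d(x', y') ≥ d`, while `d(x', y') ≤ d` is the diameter bound.
-/

namespace SimpleGraph

variable {V : Type*} {G : SimpleGraph V}

lemma Walk.exists_mem_support_notMem_of_connectedComponentMk_ne {s : Set V} {u v : V}
    (w : G.Walk u v) (hu : u ∈ s) (hv : v ∈ s)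
    (hne : (G.induce s).connectedComponentMk ⟨u, hu⟩ ≠ (G.induce s).connectedComponentMk ⟨v, hv⟩) :
    ∃ z ∈ w.support, z ∉ s := by
  by_contra! h
  exact hne (ConnectedComponent.sound (w.induce s h).reachable)

lemma Walk.edist_add_edist_le_length {u v z : V} (w : G.Walk u v) (hz : z ∈ w.support) :
    G.edist u z + G.edist z v ≤ w.length := by
  classical
  have hsplit := congrArg Walk.length (w.take_spec hz)
  rw [Walk.length_append] at hsplit
  rw [← hsplit, Nat.cast_add]
  exact add_le_add (edist_le _) (edist_le _)

lemma edist_le_edist_add_one_of_adj {u v w : V} (h : G.Adj v w) :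
    G.edist u w ≤ G.edist u v + 1 :=
  edist_eq_one_iff_adj.2 h ▸ SimpleGraph.edist_triangle

lemma isPeripheral_of_edist_eq_ediam {u v : V} (h : G.edist v u = G.ediam) : IsPeripheral G v :=
  le_antisymm eccent_le_ediam (h ▸ edist_le_eccent)

end SimpleGraph

theorem stmt12_general (V : Type) (G : SimpleGraph V)
    (d : ℕ) (hdiam : G.ediam = d)
    (x y : V) (hxy : G.edist x y = d)
    (p : G.Walk x y)
    (C : (G.induce ({x, y} : Set V)ᶜ).ConnectedComponent)
    (hC : ∀ (v : V) (hv : v ∈ ({x, y} : Set V)ᶜ), v ∈ p.support →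
      (G.induce ({x, y} : Set V)ᶜ).connectedComponentMk ⟨v, hv⟩ ≠ C)
    (x' : V) (hx' : x' ∈ ({x, y} : Set V)ᶜ) (hadjx : G.Adj x x')
    (hx'C : (G.induce ({x, y} : Set V)ᶜ).connectedComponentMk ⟨x', hx'⟩ = C)
    (y' : V) (hy' : y' ∈ p.support) (hadjy : G.Adj y' y) (hy'ne : y' ≠ x) :
    G.edist x' y' = d ∧ IsPeripheral G x' := by
  have hy'S : y' ∈ ({x, y} : Set V)ᶜ := by simp [hy'ne, hadjy.ne]
  have hle : G.edist x' y' ≤ d := hdiam ▸ edist_le_ediam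
  obtain ⟨w, hw⟩ := exists_walk_of_edist_ne_top (ne_top_of_le_ne_top (ENat.natCast_ne_top d) hle)
  obtain ⟨z, hz, hzxy⟩ := w.exists_mem_support_notMem_of_connectedComponentMk_ne hx' hy'S
    (hx'C ▸ (hC y' hy'S hy').symm)
  have hdist : G.edist x' y' = d := by
    refine le_antisymm hle (hxy ▸ hw ▸ le_trans ?_ (w.edist_add_edist_le_length hz))
    rcases Set.notMem_compl_iff.1 hzxy with hzx | hzy
    · subst z
      calc G.edist x y ≤ G.edist x y' + 1 := edist_le_edist_add_one_of_adj hadjy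
        _ = G.edist x' x + G.edist x y' := by
          rw [edist_eq_one_iff_adj.2 hadjx.symm, add_comm]
    · subst z
      calc G.edist x y ≤ G.edist y x' + 1 := by
            rw [SimpleGraph.edist_comm]; exact edist_le_edist_add_one_of_adj hadjx.symm
        _ = G.edist x' y + G.edist y y' := by
          rw [SimpleGraph.edist_comm, edist_eq_one_iff_adj.2 hadjy.symm]
  exact ⟨hdist, isPeripheral_of_edist_eq_ediam (hdist.trans hdiam.symm)⟩

theorem stmt12 (V : Type) [Fintype V] (G : SimpleGraph V) (hconn : KConnected G 2)
    (d : ℕ) (hd : 2 ≤ d) (hdiam : G.ediam = d)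
    (x y : V) (hxy : G.edist x y = d)
    (p : G.Walk x y) (hp : p.IsPath) (hlen : p.length = d)
    (C : (G.induce ({x, y} : Set V)ᶜ).ConnectedComponent)
    (hC : ∀ (v : V) (hv : v ∈ ({x, y} : Set V)ᶜ), v ∈ p.support →
      (G.induce ({x, y} : Set V)ᶜ).connectedComponentMk ⟨v, hv⟩ ≠ C)
    (x' : V) (hx' : x' ∈ ({x, y} : Set V)ᶜ) (hadjx : G.Adj x x')
    (hx'C : (G.induce ({x, y} : Set V)ᶜ).connectedComponentMk ⟨x', hx'⟩ = C)
    (y' : V) (hy' : y' ∈ p.support) (hadjy : G.Adj y' y) (hy'ne : y' ≠ x) :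
    G.edist x' y' = d ∧ IsPeripheral G x' :=
  stmt12_general V G d hdiam x y hxy p C hC x' hx' hadjx hx'C y' hy' hadjy hy'ne
end

section
/- If G is a k-edge-connected simple graph, then its line graph L(G) is k-connected (provided L(G) has more than k vertices). -/
open SimpleGraph

/-- Walking along `H ≤ G` connects incident edges in an induced sub-line-graph of `G`. -/
lemma walk_reach {V : Type} (G H : SimpleGraph V) (hHG : H ≤ G)
    (T : Set G.edgeSet) (hT : ∀ x : G.edgeSet, ↑x ∈ H.edgeSet → x ∈ T)
    {a b : V} (p : H.Walk a b) :
    ∀ (e f : G.edgeSet) (he : ↑e ∈ H.edgeSet) (hf : ↑f ∈ H.edgeSet),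
      a ∈ (e : Sym2 V) → b ∈ (f : Sym2 V) →
      (G.lineGraph.induce T).Reachable ⟨e, hT e he⟩ ⟨f, hT f hf⟩ := by
  induction p with
  | nil =>
    intro e f he hf hae hbf
    by_cases hef : e = f
    · subst hef; exact Reachable.refl _
    · refine SimpleGraph.Adj.reachable ?_
      show G.lineGraph.Adj e f
      exact lineGraph_adj_iff_exists.mpr ⟨hef, _, hae, hbf⟩
  | @cons a c b h q ih =>
    intro e f he hf hae hbf
    have hgH : s(a, c) ∈ H.edgeSet := H.mem_edgeSet.mpr h
    have hgG : s(a, c) ∈ G.edgeSet := G.mem_edgeSet.mpr (hHG h)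
    set g : G.edgeSet := ⟨s(a, c), hgG⟩ with hgdef
    have h1 : (G.lineGraph.induce T).Reachable ⟨e, hT e he⟩ ⟨g, hT g hgH⟩ := by
      by_cases heg : e = g
      · subst heg; exact Reachable.refl _
      · refine SimpleGraph.Adj.reachable ?_
        show G.lineGraph.Adj e g
        exact lineGraph_adj_iff_exists.mpr ⟨heg, a, hae, Sym2.mem_mk_left a c⟩
    exact h1.trans (ih g f hgH hf (Sym2.mem_mk_right a c) hbf)

theorem stmt15 (k : ℕ) (V : Type) [Fintype V] [DecidableEq V] (G : SimpleGraph V)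
    [DecidableRel G.Adj] (hconn : KEdgeConnected G k)
    (hcard : k < Fintype.card G.edgeSet) :
    KConnected G.lineGraph k := by
  constructor
  · exact hcard.trans_le (Fintype.card_congr (Equiv.refl _)).le
  · intro S hS hcut
    apply hcut
    set F : Finset (Sym2 V) := S.image Subtype.val with hF
    have hFcard : F.card < k := lt_of_le_of_lt Finset.card_image_le hS
    have hH : (G.deleteEdges ↑F).Connected := hconn F hFcard
    set H := G.deleteEdges (↑F : Set (Sym2 V)) with hHdef
    have hHG : H ≤ G := G.deleteEdges_le _
    have hT : ∀ x : G.edgeSet, ↑x ∈ H.edgeSet → x ∈ ((↑S : Set G.edgeSet)ᶜ) := by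
      intro x hx hxS
      have hmem : (↑x : Sym2 V) ∈ (F : Set (Sym2 V)) :=
        Finset.mem_coe.mpr (Finset.mem_image.mpr ⟨x, hxS, rfl⟩)
      rw [hHdef, edgeSet_deleteEdges] at hx
      exact hx.2 hmem
    rintro ⟨e, heS⟩ ⟨f, hfS⟩
    have hmemH : ∀ (x : G.edgeSet), x ∈ ((↑S : Set G.edgeSet)ᶜ) → ↑x ∈ H.edgeSet := by
      intro x hx
      rw [hHdef, edgeSet_deleteEdges]
      refine ⟨x.2, fun hmem => hx ?_⟩
      obtain ⟨y, hy, hxy⟩ := Finset.mem_image.mp hmem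
      exact Finset.mem_coe.mpr (Subtype.ext hxy ▸ hy)
    have heH : ↑e ∈ H.edgeSet := hmemH e heS
    have hfH : ↑f ∈ H.edgeSet := hmemH f hfS
    obtain ⟨p⟩ := hH.preconnected (↑e : Sym2 V).out.1 (↑f : Sym2 V).out.1
    exact walk_reach G H hHG _ hT p e f heH hfH (Sym2.out_fst_mem _) (Sym2.out_fst_mem _)
end
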